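/- arXiv:2506.04412 — 12 statements merged into one kernel-verified Lean document; each statement's English description precedes it below -/
import Mathlib

section
/- Let X be a complex Banach space of dimension at least three, let A ∈ B(X), and let x ∈ X and f ∈ X′ be nonzero with f(x) = 0 and x⊗f ≠ 0. Then A∘(x⊗f) is a nonzero idempotent if and only if f(Ax) = 2 and f(A²x) = 0. -/
theorem stmt_5 {X : Type*} [NormedAddCommGroup X] [NormedSpace ℂ X] [CompleteSpace X]
    (hdim : 3 ≤ Module.rank ℂ X)
    (A : X →L[ℂ] X)
    (x : X) (hx : x ≠ 0) (f : X →L[ℂ] ℂ) (hf : f ≠ 0) (hfx : f x = 0)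
    (hne : f.smulRight x ≠ 0) :
    (IsIdempotentElem ((2⁻¹ : ℂ) • (A * f.smulRight x + f.smulRight x * A)) ∧
      (2⁻¹ : ℂ) • (A * f.smulRight x + f.smulRight x * A) ≠ 0) ↔
      (f (A x) = 2 ∧ f (A (A x)) = 0) := by
  set T := f.smulRight x with hT
  set J := (2⁻¹ : ℂ) • (A * T + T * A) with hJdef
  have hJ : ∀ w, J w = (2⁻¹ * f w) • A x + (2⁻¹ * f (A w)) • x := by
    intro w
    simp [hJdef, hT, ContinuousLinearMap.smul_apply, ContinuousLinearMap.add_apply,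
      ContinuousLinearMap.mul_apply, ContinuousLinearMap.smulRight_apply, map_smul,
      smul_add, smul_smul]
  have hfJ : ∀ w, f (J w) = 2⁻¹ * f w * f (A x) := by
    intro w
    rw [hJ w]
    simp [hfx, mul_assoc]
  have hfAJ : ∀ w, f (A (J w)) = 2⁻¹ * f w * f (A (A x)) + 2⁻¹ * f (A w) * f (A x) := by
    intro w
    rw [hJ w]
    simp [map_add, map_smul, smul_eq_mul, mul_assoc]
  obtain ⟨z0, hz0⟩ : ∃ z, f z ≠ 0 := by
    by_contra h
    push_neg at h
    exact hf (ContinuousLinearMap.ext fun w => by simp [h w])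
  set z := (f z0)⁻¹ • z0 with hz
  have hfz : f z = 1 := by simp [hz, inv_mul_cancel₀ hz0]
  constructor
  · rintro ⟨hid, hne0⟩
    have hpt : ∀ w, J (J w) = J w := fun w => by
      have := ContinuousLinearMap.ext_iff.mp hid w
      simpa [ContinuousLinearMap.mul_apply] using this
    have hα : f (A x) * f (A x) = 2 * f (A x) := by
      have h1 := congrArg f (hpt z)
      rw [hfJ (J z), hfJ z, hfz] at h1
      linear_combination 4 * h1
    have hα2 : f (A x) = 2 := by
      by_cases h0 : f (A x) = 0
      · exfalso
        apply hne0
        have hJx : ∀ w, J w = (2⁻¹ * (2⁻¹ * f w * f (A (A x)) + 2⁻¹ * f (A w) * 0)) • x := by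
          intro w
          rw [← hpt w, hJ (J w), hfJ w, hfAJ w, h0]
          simp
        refine ContinuousLinearMap.ext fun w => ?_
        rw [← hpt w, hJx w, map_smul, hJx x, hfx]
        simp
      · exact mul_right_cancel₀ h0 (by linear_combination hα)
    refine ⟨hα2, ?_⟩
    have h1 := hpt z
    rw [hJ (J z), hfJ z, hfAJ z, hJ z, hfz, hα2] at h1
    have h2 : ((4 : ℂ)⁻¹ * f (A (A x))) • x = 0 := by
      linear_combination (norm := module) h1
    rcases smul_eq_zero.mp h2 with h3 | h3
    · have h4 : ((4 : ℂ)⁻¹ : ℂ) ≠ 0 := by norm_num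
      field_simp at h3
      simpa using h3
    · exact absurd h3 hx
  · rintro ⟨h2, h0⟩
    constructor
    · show J * J = J
      ext w
      rw [ContinuousLinearMap.mul_apply, hJ (J w), hfJ w, hfAJ w, hJ w, h2, h0]
      module
    · intro h
      have hzero : f (J z) = 0 := by rw [h]; simp
      rw [hfJ z, hfz, h2] at hzero
      norm_num at hzero
end

section
/- Let X be a complex Banach space of dimension at least three and let A ∈ B(X) be a nonzero operator. Suppose that for some nonzero λ ∈ ℂ and some nonzero x ∈ X, the operator A∘(x⊗f) is a nonzero idempotent for every f ∈ X′ with f(x) = 1/λ. Then Ax = λx. -/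
open ContinuousLinearMap in
lemma aux_ext {X : Type*} [NormedAddCommGroup X] [NormedSpace ℂ X] {x u : X}
    (hli : LinearIndependent ℂ ![x, u]) : ∃ g : X →L[ℂ] ℂ, g x = 0 ∧ g u = 1 := by
  set W := Submodule.span ℂ (Set.range ![x, u]) with hW
  have : FiniteDimensional ℂ W := FiniteDimensional.span_of_finite ℂ (Set.finite_range _)
  let b := Module.Basis.span hli
  obtain ⟨g, hg⟩ := (SeparatingDual.dualMap_surjective_iff (R := ℂ) (V := X)
    (f := W.subtype)).mpr W.injective_subtype (b.coord 1)
  have hgw : ∀ w : W, g (w : X) = b.coord 1 w := by intro w; have := congrFun (congrArg (fun (φ : Module.Dual ℂ W) => φ.toFun) hg) w; simpa using this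
  have hx0 : (⟨x, Submodule.subset_span ⟨0, rfl⟩⟩ : W) = b 0 := by
    apply Subtype.ext; rw [Module.Basis.span_apply]; rfl
  have hu1 : (⟨u, Submodule.subset_span ⟨1, rfl⟩⟩ : W) = b 1 := by
    apply Subtype.ext; rw [Module.Basis.span_apply]; rfl
  refine ⟨g, ?_, ?_⟩
  · rw [show x = ((⟨x, Submodule.subset_span ⟨0, rfl⟩⟩ : W) : X) from rfl, hgw, hx0]
    simp
  · rw [show u = ((⟨u, Submodule.subset_span ⟨1, rfl⟩⟩ : W) : X) from rfl, hgw, hu1]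
    simp

theorem stmt_6 {X : Type*} [NormedAddCommGroup X] [NormedSpace ℂ X] [CompleteSpace X]
    (hdim : 3 ≤ Module.rank ℂ X)
    (A : X →L[ℂ] X) (hA : A ≠ 0)
    (lam : ℂ) (hlam : lam ≠ 0) (x : X) (hx : x ≠ 0)
    (h : ∀ f : X →L[ℂ] ℂ, f x = 1 / lam →
      IsIdempotentElem ((2⁻¹ : ℂ) • (A * f.smulRight x + f.smulRight x * A)) ∧
        (2⁻¹ : ℂ) • (A * f.smulRight x + f.smulRight x * A) ≠ 0) :
    A x = lam • x := by
  -- general computation of T applied to a vector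
  have hT : ∀ (f : X →L[ℂ] ℂ) (z : X),
      ((2⁻¹ : ℂ) • (A * f.smulRight x + f.smulRight x * A)) z
        = (2⁻¹ : ℂ) • (f z • A x + f (A z) • x) := by
    intro f z
    simp [ContinuousLinearMap.smulRight_apply, ContinuousLinearMap.mul_apply,
      map_smul, smul_add]
  by_cases hmu : ∃ μ : ℂ, A x = μ • x
  · obtain ⟨μ, hμ⟩ := hmu
    obtain ⟨f0, hf0⟩ := SeparatingDual.exists_eq_one (R := ℂ) hx
    set f : X →L[ℂ] ℂ := lam⁻¹ • f0 with hf
    have hfx : f x = 1 / lam := by simp [hf, hf0, one_div]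
    obtain ⟨hid, hne⟩ := h f hfx
    set T := (2⁻¹ : ℂ) • (A * f.smulRight x + f.smulRight x * A) with hTdef
    have hTx : T x = (μ / lam) • x := by
      rw [hT f x, hfx, hμ, map_smul, hfx]
      match_scalars
      all_goals field_simp
      all_goals (ring_nf; rw [mul_inv_cancel_right₀ hlam]; ring)
    have key : T (T x) = T x := by
      conv_rhs => rw [← hid]
      rfl
    rw [hTx, map_smul, hTx, smul_smul] at key
    have : (μ / lam * (μ / lam) - μ / lam) • x = 0 := by
      rw [sub_smul, key, sub_self]
    rw [smul_eq_zero] at this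
    rcases this.resolve_right hx with h0
    have h0' : μ / lam * (μ / lam - 1) = 0 := by ring_nf; ring_nf at h0; linear_combination h0
    rcases mul_eq_zero.mp h0' with h1 | h2
    · -- μ = 0, so A x = 0, derive T = 0, contradiction
      exfalso
      have hμ0 : μ = 0 := by
        field_simp at h1; simpa using h1
      have hAx0 : A x = 0 := by rw [hμ, hμ0, zero_smul]
      apply hne
      ext z
      have hTz : T z = ((2⁻¹ : ℂ) * f (A z)) • x := by
        rw [hT f z, hAx0]; module
      have h2 : T (T z) = T z := by
        conv_rhs => rw [← hid]
        rfl
      rw [hTz, map_smul, hTx, hμ0] at h2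
      simp only [zero_div, zero_smul, smul_zero] at h2
      rw [ContinuousLinearMap.zero_apply, hTz]
      exact h2.symm
    · have : μ = lam := by
        have : μ / lam = 1 := by linear_combination h2
        field_simp at this; exact this
      rw [hμ, this]
  · -- linear independence case: contradiction
    exfalso
    have hli : ∀ c d : ℂ, c • x + d • A x = 0 → c = 0 ∧ d = 0 := by
      intro c d hcd
      by_cases hd : d = 0
      · subst hd
        rw [zero_smul, add_zero, smul_eq_zero] at hcd
        exact ⟨hcd.resolve_right hx, rfl⟩
      · exfalso
        apply hmu
        refine ⟨d⁻¹ * (-c), ?_⟩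
        have h2 : d • A x = (-c) • x := by linear_combination (norm := module) hcd
        calc A x = d⁻¹ • (d • A x) := by rw [smul_smul, inv_mul_cancel₀ hd, one_smul]
          _ = (d⁻¹ * (-c)) • x := by rw [h2, smul_smul]
    -- key: every admissible f has f (A x) = 1
    have key : ∀ f : X →L[ℂ] ℂ, f x = 1 / lam → f (A x) = 1 := by
      intro f hfx
      obtain ⟨hid, -⟩ := h f hfx
      set T := (2⁻¹ : ℂ) • (A * f.smulRight x + f.smulRight x * A) with hTdef
      set a := f (A x) with ha
      set b := f (A (A x)) with hb
      have hTx : T x = (2⁻¹ * lam⁻¹) • A x + (2⁻¹ * a) • x := by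
        rw [hT f x, hfx]; rw [one_div]; module
      have hkey : T (T x) = T x := by
        conv_rhs => rw [← hid]
        rfl
      have hTTx : T (T x) = (2⁻¹ * (2⁻¹ * lam⁻¹ * a + 2⁻¹ * a * lam⁻¹)) • A x
          + (2⁻¹ * (2⁻¹ * lam⁻¹ * b + 2⁻¹ * a * a)) • x := by
        rw [hT f (T x), hTx]
        simp only [map_add, map_smul, hfx, smul_eq_mul, ← ha, ← hb]
        rw [one_div]
        module
      rw [hTTx, hTx] at hkey
      have e : (2⁻¹ * (2⁻¹ * lam⁻¹ * b + 2⁻¹ * a * a) - 2⁻¹ * a) • x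
          + (2⁻¹ * (2⁻¹ * lam⁻¹ * a + 2⁻¹ * a * lam⁻¹) - 2⁻¹ * lam⁻¹) • A x = 0 := by
        linear_combination (norm := module) hkey
      obtain ⟨-, hd⟩ := hli _ _ e
      field_simp at hd
      linear_combination (1/2 : ℂ) * hd
    obtain ⟨f0, hf0⟩ := SeparatingDual.exists_eq_one (R := ℂ) hx
    have hfx : (lam⁻¹ • f0) x = 1 / lam := by simp [hf0, one_div]
    have hli2 : LinearIndependent ℂ ![x, A x] := by
      rw [LinearIndependent.pair_iff]
      intro s t hst
      exact hli s t hst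
    obtain ⟨g, hgx, hgu⟩ := aux_ext hli2
    have hfx2 : (lam⁻¹ • f0 + g) x = 1 / lam := by
      simp [hf0, hgx, one_div]
    have k1 := key _ hfx
    have k2 := key _ hfx2
    rw [ContinuousLinearMap.add_apply, k1, hgu] at k2
    norm_num at k2
end

section
/- Let X be a complex Banach space of dimension at least three and let A ∈ B(X). The following are equivalent: (i) A = 0; (ii) A∘Y is idempotent for every Y ∈ B(X); (iii) A∘R is idempotent for every R such that R or −R is a rank-one idempotent. -/
theorem stmt_7 {X : Type*} [NormedAddCommGroup X] [NormedSpace ℂ X] [CompleteSpace X]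
    (hdim : 3 ≤ Module.rank ℂ X) (A : X →L[ℂ] X) :
    (A = 0 ↔ ∀ Y : X →L[ℂ] X, IsIdempotentElem ((2⁻¹ : ℂ) • (A * Y + Y * A))) ∧
    (A = 0 ↔ ∀ R : X →L[ℂ] X,
      (LinearMap.rank (R : X →ₗ[ℂ] X) = 1 ∧ (R * R = R ∨ R * R = -R)) →
      IsIdempotentElem ((2⁻¹ : ℂ) • (A * R + R * A))) := by
  have key : (∀ R : X →L[ℂ] X,
      (LinearMap.rank (R : X →ₗ[ℂ] X) = 1 ∧ (R * R = R ∨ R * R = -R)) →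
      IsIdempotentElem ((2⁻¹ : ℂ) • (A * R + R * A))) → A = 0 := by
    intro h
    ext u
    simp only [ContinuousLinearMap.zero_apply]
    by_cases hu : u = 0
    · simp [hu]
    obtain ⟨g, _, hgu⟩ := exists_dual_vector ℂ u (norm_ne_zero_iff.mpr hu)
    set f : X →L[ℂ] ℂ := (‖u‖ : ℂ)⁻¹ • g with hf
    have hun : (‖u‖ : ℂ) ≠ 0 := by
      simpa using norm_ne_zero_iff.mpr hu
    have hfu : f u = 1 := by
      simp [hf, hgu, inv_mul_cancel₀ hun]
    set P : X →L[ℂ] X := f.smulRight u with hPdef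
    have hPapp : ∀ x, P x = f x • u := fun x => rfl
    have hPP : P * P = P := by
      ext x
      simp [ContinuousLinearMap.mul_apply, hPapp, hfu, smul_smul]
    have hrangeP : LinearMap.range (P : X →ₗ[ℂ] X) = Submodule.span ℂ {u} := by
      apply le_antisymm
      · rintro y ⟨x, rfl⟩
        exact Submodule.smul_mem _ _ (Submodule.mem_span_singleton_self u)
      · rw [Submodule.span_singleton_le_iff_mem]
        exact ⟨u, by simp [hPapp, hfu]⟩
    have hrank : LinearMap.rank (P : X →ₗ[ℂ] X) = 1 := by
      rw [LinearMap.rank, hrangeP]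
      have := finrank_span_singleton (K := ℂ) hu
      rw [← Module.finrank_eq_rank, this]
      norm_num
    have hrankN : LinearMap.rank ((-P : X →L[ℂ] X) : X →ₗ[ℂ] X) = 1 := by
      have : ((-P : X →L[ℂ] X) : X →ₗ[ℂ] X) = -(P : X →ₗ[ℂ] X) := rfl
      rw [this, LinearMap.rank, LinearMap.range_neg, ← LinearMap.rank, hrank]
    have h1 := h P ⟨hrank, Or.inl hPP⟩
    have h2 := h (-P) ⟨hrankN, Or.inr (by rw [neg_mul_neg, hPP, neg_neg])⟩
    set T : X →L[ℂ] X := (2⁻¹ : ℂ) • (A * P + P * A) with hT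
    have hT2 : (2⁻¹ : ℂ) • (A * (-P) + (-P) * A) = -T := by
      rw [hT]; rw [mul_neg, neg_mul, ← neg_add, smul_neg]
    rw [hT2] at h2
    have hTT : T * T = T := h1
    have hTT' : T * T = -T := by
      have := h2
      rwa [IsIdempotentElem, neg_mul_neg] at this
    have hT0 : T = 0 := by
      have : T = -T := hTT.symm.trans hTT'
      have h2T : (2 : ℂ) • T = 0 := by
        rw [two_smul]
        nth_rewrite 1 [this]
        simp
      have : ((2 : ℂ)⁻¹) • ((2 : ℂ) • T) = 0 := by rw [h2T, smul_zero]
      rwa [smul_smul, inv_mul_cancel₀ (two_ne_zero), one_smul] at this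
    have hAP : A * P + P * A = 0 := by
      have : ((2 : ℂ)) • T = 0 := by rw [hT0, smul_zero]
      rw [hT, smul_smul, mul_inv_cancel₀ (two_ne_zero), one_smul] at this
      exact this
    have happ : A u + f (A u) • u = 0 := by
      have := congrArg (fun (S : X →L[ℂ] X) => S u) hAP
      simpa [ContinuousLinearMap.mul_apply, hPapp, hfu] using this
    have hfAu : f (A u) = 0 := by
      have := congrArg f happ
      simp only [map_add, map_smul, hfu, map_zero, smul_eq_mul, mul_one] at this
      have h2 : (2 : ℂ) * f (A u) = 0 := by ring_nf; linear_combination this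
      exact (mul_eq_zero.mp h2).resolve_left two_ne_zero
    rw [hfAu, zero_smul, add_zero] at happ
    exact happ
  constructor
  · constructor
    · intro hA Y
      rw [hA]
      simp only [zero_mul, mul_zero, add_zero, smul_zero]
      exact IsIdempotentElem.zero
    · intro h
      exact key (fun R _ => h R)
  · constructor
    · intro hA R _
      rw [hA]
      simp only [zero_mul, mul_zero, add_zero, smul_zero]
      exact IsIdempotentElem.zero
    · exact key
end

section
/- Let X be a complex Banach space of dimension at least three and let A ∈ B(X). Then A = I (the identity operator) if and only if A∘R is a nonzero idempotent for every rank-one idempotent R ∈ B(X). -/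
open ContinuousLinearMap Submodule

/-- `f.smulRight x` is a rank-one idempotent when `f x = 1` and `x ≠ 0`. -/
lemma stmt8_aux_rankone {X : Type*} [NormedAddCommGroup X] [NormedSpace ℂ X]
    (f : X →L[ℂ] ℂ) (x : X) (hx : x ≠ 0) (hfx : f x = 1) :
    (f.smulRight x) * (f.smulRight x) = f.smulRight x ∧
      LinearMap.rank ((f.smulRight x : X →L[ℂ] X) : X →ₗ[ℂ] X) = 1 := by
  constructor
  · ext y
    simp [ContinuousLinearMap.mul_apply, hfx, smul_smul]
  · have hrange : LinearMap.range ((f.smulRight x : X →L[ℂ] X) : X →ₗ[ℂ] X)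
        = span ℂ {x} := by
      apply le_antisymm
      · rintro _ ⟨y, rfl⟩
        simp only [ContinuousLinearMap.coe_coe, smulRight_apply]
        exact smul_mem _ _ (subset_span rfl)
      · rw [span_le, Set.singleton_subset_iff]
        exact ⟨x, by simp [hfx]⟩
    rw [LinearMap.rank, hrange, rank_span_set (LinearIndepOn.singleton (v := id) hx),
      Cardinal.mk_singleton]

/-- If `A x` is not a multiple of `x`, there is a continuous functional vanishing at `x`
and taking the value `1` at `A x`. -/
lemma stmt8_aux_g {X : Type*} [NormedAddCommGroup X] [NormedSpace ℂ X]
    (A : X →L[ℂ] X) {x : X} (hx : ∀ c : ℂ, A x ≠ c • x) :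
    ∃ g : X →L[ℂ] ℂ, g x = 0 ∧ g (A x) = 1 := by
  have hx0 : x ≠ 0 := by
    rintro rfl
    exact hx 0 (by simp)
  have hli : LinearIndependent ℂ ![A x, x] := by
    rw [linearIndependent_fin2]
    exact ⟨hx0, fun a h => hx a (by simpa using h.symm)⟩
  set W := span ℂ (Set.range ![A x, x]) with hW
  haveI : FiniteDimensional ℂ W := FiniteDimensional.span_of_finite ℂ (Set.finite_range _)
  set b := Module.Basis.span hli with hb
  obtain ⟨g, hg⟩ := (SeparatingDual.dualMap_surjective_iff (R := ℂ) (V := X)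
    (f := W.subtype)).mpr W.injective_subtype (b.coord 0)
  have hgw : ∀ w : W, g (w : X) = b.coord 0 w := fun w =>
    congrFun (congrArg (fun φ : Module.Dual ℂ W => (φ : W → ℂ)) hg) w
  constructor
  constructor
  · have h1 := hgw (b 1)
    simp only [Module.Basis.coord_apply, Module.Basis.repr_self] at h1
    rw [Module.Basis.span_apply] at h1
    simpa using h1
  · have h0 := hgw (b 0)
    simp only [Module.Basis.coord_apply, Module.Basis.repr_self] at h0
    rw [Module.Basis.span_apply] at h0
    simpa using h0

theorem stmt_8 {X : Type*} [NormedAddCommGroup X] [NormedSpace ℂ X] [CompleteSpace X]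
    (hdim : 3 ≤ Module.rank ℂ X) (A : X →L[ℂ] X) :
    A = 1 ↔ ∀ R : X →L[ℂ] X,
      (R * R = R ∧ LinearMap.rank (R : X →ₗ[ℂ] X) = 1) →
      (IsIdempotentElem ((2⁻¹ : ℂ) • (A * R + R * A)) ∧
        (2⁻¹ : ℂ) • (A * R + R * A) ≠ 0) := by
  constructor
  · rintro rfl R ⟨hR1, hR2⟩
    have hR : (2⁻¹ : ℂ) • ((1 : X →L[ℂ] X) * R + R * 1) = R := by
      rw [one_mul, mul_one]; module
    rw [hR]
    refine ⟨hR1, ?_⟩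
    rintro rfl
    simp [LinearMap.rank] at hR2
  · intro hyp
    -- Step 1: every vector is an eigenvector of `A`.
    have hspan : ∀ x : X, ∃ c : ℂ, A x = c • x := by
      intro x
      by_contra hcon
      push_neg at hcon
      have hx0 : x ≠ 0 := by
        rintro rfl
        exact hcon 0 (by simp)
      obtain ⟨g, hg1, hg2⟩ := stmt8_aux_g A hcon
      have claim : ∀ h : X →L[ℂ] ℂ, h x = 1 → h (A x) = 1 := by
        intro h hh
        obtain ⟨hid, -⟩ := hyp (h.smulRight x) (stmt8_aux_rankone h x hx0 hh)
        have e := congrArg (fun S : X →L[ℂ] X => g (S x)) hid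
        simp only [ContinuousLinearMap.mul_apply, add_apply, ContinuousLinearMap.smul_apply,
          smulRight_apply, map_add, map_smul, map_smulₛₗ, RingHom.id_apply, smul_eq_mul,
          hh, hg1, hg2, one_smul, mul_one, mul_zero, add_zero, zero_add] at e
        linear_combination 2 * e
      obtain ⟨f, hf⟩ := SeparatingDual.exists_eq_one (R := ℂ) hx0
      have h1 := claim f hf
      have h2 := claim (f + g) (by simp [hf, hg1])
      simp only [add_apply, h1, hg2] at h2
      norm_num at h2
    -- Step 2: the eigenvalue is `1` at every nonzero vector.
    have key : ∀ x : X, x ≠ 0 → A x = x := by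
      intro x hx0
      obtain ⟨c, hc⟩ := hspan x
      obtain ⟨f, hf⟩ := SeparatingDual.exists_eq_one (R := ℂ) hx0
      obtain ⟨hid, hne⟩ := hyp (f.smulRight x) (stmt8_aux_rankone f x hx0 hf)
      set T := (2⁻¹ : ℂ) • (A * f.smulRight x + f.smulRight x * A) with hT
      have hTx : T x = c • x := by
        rw [hT]
        simp only [ContinuousLinearMap.smul_apply, add_apply, ContinuousLinearMap.mul_apply,
          smulRight_apply, hf, one_smul, hc, map_smul, smul_eq_mul, mul_one]
        module
      have hc2 : c * c = c := by
        have e := congrArg (fun S : X →L[ℂ] X => S x) hid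
        simp only [ContinuousLinearMap.mul_apply, hTx, map_smul, smul_smul] at e
        have : (c * c - c) • x = 0 := by
          rw [sub_smul, e, sub_self]
        rcases smul_eq_zero.mp this with h | h
        · linear_combination h
        · exact absurd h hx0
      have hc01 : c = 0 ∨ c = 1 := by
        have : c * (c - 1) = 0 := by ring_nf; linear_combination hc2
        rcases mul_eq_zero.mp this with h | h
        · exact Or.inl h
        · exact Or.inr (by linear_combination h)
      rcases hc01 with rfl | rfl
      · exfalso
        have hAx0 : A x = 0 := by simpa using hc
        have hT2 : T * T = 0 := by
          ext z
          simp [hT, ContinuousLinearMap.mul_apply, hAx0, map_add, map_smul,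
            smul_smul, smul_zero, mul_zero]
        exact hne (by rw [← hid, hT2])
      · simpa using hc
    ext x
    rcases eq_or_ne x 0 with rfl | hx0
    · simp
    · simpa using key x hx0
end

section
/- Let X be a complex Banach space of dimension at least two and let A ∈ B(X) with A ∉ {0, I, −I}. If A² = 0 or A² = I, then there exists an operator B ∈ B(X) of rank at most two such that A∘B is idempotent and B∘B is not idempotent. -/
lemma exists_dual' {X : Type*} [NormedAddCommGroup X] [NormedSpace ℂ X] [CompleteSpace X]
  (x : X) (hx : x ≠ 0) (c : ℂ) : ∃ g : X →L[ℂ] ℂ, g x = c := by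
  obtain ⟨g, -, hg⟩ := exists_dual_vector ℂ x (norm_ne_zero_iff.mpr hx)
  refine ⟨(c / ‖x‖) • g, ?_⟩
  have : (‖x‖ : ℂ) ≠ 0 := by exact_mod_cast norm_ne_zero_iff.mpr hx
  simp [hg]
  field_simp

lemma rank_aux {X : Type*} [NormedAddCommGroup X] [NormedSpace ℂ X]
  (p q : X →L[ℂ] ℂ) (u v : X) :
  LinearMap.rank ((p.smulRight u + q.smulRight v : X →L[ℂ] X) : X →ₗ[ℂ] X) ≤ 2 := by
  have hr : LinearMap.range ((p.smulRight u + q.smulRight v : X →L[ℂ] X) : X →ₗ[ℂ] X)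
      ≤ Submodule.span ℂ {u, v} := by
    rintro y ⟨x, rfl⟩
    simp only [ContinuousLinearMap.coe_coe, ContinuousLinearMap.add_apply,
      ContinuousLinearMap.smulRight_apply]
    exact Submodule.add_mem _
      (Submodule.smul_mem _ _ (Submodule.subset_span (by simp)))
      (Submodule.smul_mem _ _ (Submodule.subset_span (by simp)))
  calc LinearMap.rank _ ≤ Module.rank ℂ (Submodule.span ℂ ({u, v} : Set X)) :=
        Submodule.rank_mono hr
    _ ≤ Cardinal.mk ({u, v} : Set X) := rank_span_le _
    _ ≤ 2 := by
        refine le_trans (Cardinal.mk_insert_le) ?_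
        simp
        norm_num

lemma half_TT {X : Type*} [NormedAddCommGroup X] [NormedSpace ℂ X]
    (T : X →L[ℂ] X) : (2⁻¹ : ℂ) • (T + T) = T := by
  rw [← two_smul ℂ, smul_smul]; norm_num

lemma main_aux {X : Type*} [NormedAddCommGroup X] [NormedSpace ℂ X]
    (A B : X →L[ℂ] X) (u : X) (hu : u ≠ 0)
    (hAB : A * B + B * A = 0)
    (hBu : B (B u) = (4 : ℂ) • u) :
    IsIdempotentElem ((2⁻¹ : ℂ) • (A * B + B * A)) ∧
      ¬ IsIdempotentElem ((2⁻¹ : ℂ) • (B * B + B * B)) := by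
  constructor
  · rw [hAB, smul_zero]; exact IsIdempotentElem.zero
  · rw [half_TT]
    intro hid
    have h1 : ((B * B) * (B * B)) u = B (B u) := congrFun (congrArg DFunLike.coe hid) u
    simp only [ContinuousLinearMap.mul_apply, hBu, map_smul] at h1
    rw [smul_smul] at h1
    have : ((4 : ℂ) * 4 - 4) • u = 0 := by rw [sub_smul, h1]; simp
    rw [smul_eq_zero] at this
    rcases this with h'|h'
    · norm_num at h'
    · exact hu h'
theorem stmt_9 {X : Type*} [NormedAddCommGroup X] [NormedSpace ℂ X] [CompleteSpace X]
    (hdim : 2 ≤ Module.rank ℂ X)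
    (A : X →L[ℂ] X) (hA0 : A ≠ 0) (hA1 : A ≠ 1) (hA1' : A ≠ -1)
    (h : A * A = 0 ∨ A * A = 1) :
    ∃ B : X →L[ℂ] X, LinearMap.rank (B : X →ₗ[ℂ] X) ≤ 2 ∧
      IsIdempotentElem ((2⁻¹ : ℂ) • (A * B + B * A)) ∧
      ¬ IsIdempotentElem ((2⁻¹ : ℂ) • (B * B + B * B)) := by
  rcases h with h2 | h2
  · -- A² = 0
    have hA2 : ∀ x, A (A x) = 0 := fun x => by
      have := congrFun (congrArg DFunLike.coe h2) x
      simpa [ContinuousLinearMap.mul_apply] using this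
    obtain ⟨u, hu⟩ : ∃ u, A u ≠ 0 := by
      by_contra hc; push_neg at hc
      exact hA0 (by ext x; simpa using hc x)
    set v := A u with hv
    have hu0 : u ≠ 0 := fun h0 => hu (by rw [hv, h0, map_zero])
    -- find k with k u = 0, k v = 2
    obtain ⟨g₁, hg₁⟩ := exists_dual_vector ℂ v (norm_ne_zero_iff.mpr hu)
    have hg₁v : g₁ v ≠ 0 := by
      rw [hg₁.2]; exact Complex.ofReal_ne_zero.mpr (norm_ne_zero_iff.mpr hu)
    set k : X →L[ℂ] ℂ := (2 / g₁ v) • g₁ + (-(2 * g₁ u) / (g₁ v * g₁ v)) • (g₁.comp A) with hk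
    have hku : k u = 0 := by
      simp only [hk, ContinuousLinearMap.add_apply, ContinuousLinearMap.smul_apply,
        ContinuousLinearMap.comp_apply, smul_eq_mul]
      field_simp
      ring
    have hkv : k v = 2 := by
      have : A v = 0 := hA2 u
      simp only [hk, ContinuousLinearMap.add_apply, ContinuousLinearMap.smul_apply,
        ContinuousLinearMap.comp_apply, this, map_zero, smul_eq_mul, mul_zero, add_zero]
      field_simp
    set B : X →L[ℂ] X := (-(k.comp A)).smulRight u + k.smulRight v with hB
    have hBx : ∀ x, B x = -(k (A x)) • u + k x • v := fun x => by
      simp [hB, ContinuousLinearMap.smulRight_apply]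
    have hAB : A * B + B * A = 0 := by
      ext x
      simp only [ContinuousLinearMap.add_apply, ContinuousLinearMap.mul_apply,
        ContinuousLinearMap.zero_apply, hBx, map_add, map_smul, map_zero, hA2, ← hv,
        show A v = 0 from hA2 u]
      module
    have hBu : B (B u) = (4 : ℂ) • u := by
      have h1 : B u = (-2 : ℂ) • u := by
        rw [hBx, ← hv, hkv, hku]; module
      rw [h1, map_smul, hBx, ← hv, hkv, hku]
      module
    exact ⟨B, rank_aux _ _ _ _, main_aux A B u hu0 hAB hBu⟩
  · -- A² = 1
    have hA2 : ∀ x, A (A x) = x := fun x => by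
      have := congrFun (congrArg DFunLike.coe h2) x
      simpa [ContinuousLinearMap.mul_apply] using this
    obtain ⟨x₀, hx₀⟩ : ∃ x, A x + x ≠ 0 := by
      by_contra hc; push_neg at hc
      refine hA1' (by ext x; have := hc x; simp only [ContinuousLinearMap.neg_apply,
        ContinuousLinearMap.one_apply]; linear_combination (norm := module) this)
    obtain ⟨y₀, hy₀⟩ : ∃ y, A y - y ≠ 0 := by
      by_contra hc; push_neg at hc
      apply hA1
      ext x
      have hx := hc x
      simp only [ContinuousLinearMap.one_apply]
      linear_combination (norm := module) hx
    set u := A x₀ + x₀ with hu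
    set v := A y₀ - y₀ with hv
    have hAu : A u = u := by rw [hu]; rw [map_add, hA2]; abel
    have hAv : A v = -v := by rw [hv]; rw [map_sub, hA2]; abel
    have hu0 : u ≠ 0 := hx₀
    have hv0 : v ≠ 0 := hy₀
    obtain ⟨f₀, hf₀⟩ := exists_dual' u hx₀ 1
    obtain ⟨g₀, hg₀⟩ := exists_dual' v hy₀ 1
    set f : X →L[ℂ] ℂ := (2⁻¹ : ℂ) • (f₀ + f₀.comp A) with hf
    set g : X →L[ℂ] ℂ := (2⁻¹ : ℂ) • (g₀ - g₀.comp A) with hg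
    have hfA : ∀ x, f (A x) = f x := fun x => by
      simp [hf, ContinuousLinearMap.smul_apply, ContinuousLinearMap.add_apply,
        ContinuousLinearMap.comp_apply, hA2]
      ring
    have hgA : ∀ x, g (A x) = -g x := fun x => by
      simp [hg, ContinuousLinearMap.smul_apply, ContinuousLinearMap.sub_apply,
        ContinuousLinearMap.comp_apply, hA2]
      ring
    have hfu : f u = 1 := by
      simp [hf, ContinuousLinearMap.smul_apply, ContinuousLinearMap.add_apply,
        ContinuousLinearMap.comp_apply, hAu, hf₀]
      ring
    have hgv : g v = 1 := by
      simp [hg, ContinuousLinearMap.smul_apply, ContinuousLinearMap.sub_apply,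
        ContinuousLinearMap.comp_apply, hAv, hg₀]
      ring
    have hfv : f v = 0 := by
      have hthis := hfA v
      rw [hAv, map_neg] at hthis
      linear_combination -hthis / 2
    have hgu : g u = 0 := by
      have hthis := hgA u
      rw [hAu] at hthis
      linear_combination hthis / 2
    set B : X →L[ℂ] X := ((2:ℂ) • g).smulRight u + ((2:ℂ) • f).smulRight v with hB
    have hBx : ∀ x, B x = ((2:ℂ) * g x) • u + ((2:ℂ) * f x) • v := fun x => by
      simp [hB, ContinuousLinearMap.smulRight_apply, smul_smul]
    have hAB : A * B + B * A = 0 := by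
      ext x
      simp only [ContinuousLinearMap.add_apply, ContinuousLinearMap.mul_apply,
        ContinuousLinearMap.zero_apply, hBx, map_add, map_smul, hAu, hAv, hfA, hgA]
      module
    have hBu : B (B u) = (4 : ℂ) • u := by
      have h1 : B u = (2 : ℂ) • v := by
        rw [hBx, hgu, hfu]; module
      rw [h1, map_smul, hBx, hgv, hfv]
      module
    exact ⟨B, rank_aux _ _ _ _, main_aux A B u hu0 hAB hBu⟩
end

section
/- Let X be a complex Banach space of dimension at least three and let P, Q ∈ B(X) be rank-one idempotents with P ≠ Q. If Q∘(I − P) is idempotent, then there exists a rank-one idempotent R ∈ B(X) such that Q∘R = 0 and P∘R is not idempotent. -/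
open ContinuousLinearMap Submodule

/-- Prescribe a continuous linear functional on a finite linearly independent family. -/
lemma exists_clm_prescribed {X : Type*} [NormedAddCommGroup X] [NormedSpace ℂ X]
    {n : ℕ} {v : Fin n → X} (hv : LinearIndependent ℂ v) (c : Fin n → ℂ) :
    ∃ h : X →L[ℂ] ℂ, ∀ i, h (v i) = c i := by
  set W := Submodule.span ℂ (Set.range v) with hW
  have : FiniteDimensional ℂ W := FiniteDimensional.span_of_finite ℂ (Set.finite_range v)
  let b : Module.Basis (Fin n) ℂ W := Module.Basis.span hv
  let l : W →ₗ[ℂ] ℂ := b.constr ℂ c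
  let lc : W →L[ℂ] ℂ := LinearMap.toContinuousLinearMap l
  obtain ⟨h, hh, -⟩ := exists_extension_norm_eq W lc
  refine ⟨h, fun i => ?_⟩
  have hm : v i ∈ W := Submodule.subset_span (Set.mem_range_self i)
  have h1 := hh ⟨v i, hm⟩
  have h2 : b i = ⟨v i, hm⟩ := Module.Basis.span_apply hv i
  have h3 : lc (b i) = c i := by
    simp only [lc, LinearMap.coe_toContinuousLinearMap', l, Module.Basis.constr_basis]
  rw [h2] at h3
  rw [h1, h3]

/-- A rank-one idempotent has the form `z ↦ f z • x` with `f x = 1`. -/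
lemma rank_one_idem_form {X : Type*} [NormedAddCommGroup X] [NormedSpace ℂ X]
    (P : X →L[ℂ] X) (hP : P * P = P) (hr : LinearMap.rank (P : X →ₗ[ℂ] X) = 1) :
    ∃ (x : X) (f : X →L[ℂ] ℂ), f x = 1 ∧ ∀ z, P z = f z • x := by
  rw [LinearMap.rank] at hr
  obtain ⟨⟨v₀, hv₀mem⟩, hv₀ne, hgen⟩ := rank_eq_one_iff.mp hr
  have hv0' : v₀ ≠ 0 := fun h => hv₀ne (Subtype.ext h)
  obtain ⟨w, hw⟩ := hv₀mem
  have hw : P w = v₀ := hw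
  set x := v₀ with hx
  have hxne : x ≠ 0 := hv0'
  have hPx : P x = x := by
    have := congrArg (fun T : X →L[ℂ] X => T w) hP
    simp only [ContinuousLinearMap.mul_apply, hw] at this
    exact this
  have hmul : ∀ z, ∃ t : ℂ, P z = t • x := by
    intro z
    have hz : P z ∈ LinearMap.range (P : X →ₗ[ℂ] X) := ⟨z, rfl⟩
    obtain ⟨t, ht⟩ := hgen ⟨P z, hz⟩
    obtain ⟨s, hs⟩ := hgen ⟨x, ⟨w, hw⟩⟩
    have hs' : s • v₀ = x := congrArg Subtype.val hs
    have ht' : t • v₀ = P z := congrArg Subtype.val ht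
    have hsne : s ≠ 0 := by rintro rfl; rw [zero_smul] at hs'; exact hxne hs'.symm
    exact ⟨t / s, by rw [← hs', smul_smul, div_mul_cancel₀ _ hsne, ht']⟩
  obtain ⟨φ, -, hφ⟩ := exists_dual_vector ℂ x (norm_ne_zero_iff.mpr hxne)
  set f : X →L[ℂ] ℂ := (‖x‖ : ℂ)⁻¹ • (φ.comp P) with hf
  have hnx : (‖x‖ : ℂ) ≠ 0 := by simp [norm_eq_zero, hxne]
  have hfz : ∀ z, P z = f z • x := by
    intro z
    obtain ⟨t, ht⟩ := hmul z
    have : f z = t := by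
      simp only [hf, ContinuousLinearMap.smul_apply, ContinuousLinearMap.comp_apply, ht,
        map_smul, hφ, smul_eq_mul]
      field_simp
      exact mul_comm _ _
    rw [this, ht]
  have hfx : f x = 1 := by
    have := hfz x
    rw [hPx] at this
    by_contra hne
    have : (1 - f x) • x = 0 := by rw [sub_smul, one_smul, ← this, sub_self]
    rcases smul_eq_zero.mp this with h1 | h2
    · exact hne (by linear_combination -h1)
    · exact hxne h2
  exact ⟨x, f, hfx, hfz⟩

theorem stmt_11 {X : Type*} [NormedAddCommGroup X] [NormedSpace ℂ X] [CompleteSpace X]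
    (hdim : 3 ≤ Module.rank ℂ X)
    (P Q : X →L[ℂ] X)
    (hP : P * P = P) (hPrank : LinearMap.rank (P : X →ₗ[ℂ] X) = 1)
    (hQ : Q * Q = Q) (hQrank : LinearMap.rank (Q : X →ₗ[ℂ] X) = 1)
    (hPQ : P ≠ Q)
    (h : IsIdempotentElem ((2⁻¹ : ℂ) • (Q * (1 - P) + (1 - P) * Q))) :
    ∃ R : X →L[ℂ] X, R * R = R ∧ LinearMap.rank (R : X →ₗ[ℂ] X) = 1 ∧
      (2⁻¹ : ℂ) • (Q * R + R * Q) = 0 ∧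
      ¬ IsIdempotentElem ((2⁻¹ : ℂ) • (P * R + R * P)) := by
  obtain ⟨x, f, hfx, hPz⟩ := rank_one_idem_form P hP hPrank
  obtain ⟨y, g, hgy, hQz⟩ := rank_one_idem_form Q hQ hQrank
  -- Step 1: there exists `u0` with `g u0 = 0` and `f u0 = 1`.
  have hu0ex : ∃ u : X, g u = 0 ∧ f u = 1 := by
    by_contra hc
    push_neg at hc
    have hker : ∀ w : X, g w = 0 → f w = 0 := by
      intro w hw
      by_contra hfw
      exact (hc ((f w)⁻¹ • w) (by simp [hw])) (by rw [map_smul, smul_eq_mul, inv_mul_cancel₀ hfw])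
    have hfg : ∀ z, f z = g z * f y := by
      intro z
      have h1 : g (z - g z • y) = 0 := by
        simp [map_sub, map_smul, hgy, smul_eq_mul]
      have h2 := hker _ h1
      simp only [map_sub, map_smul, smul_eq_mul] at h2
      linear_combination h2
    have hfy : g x * f y = 1 := by rw [← hfg x, hfx]
    set v' : X := (2⁻¹ : ℂ) • (y - f y • x) with hv'
    set T := (2⁻¹ : ℂ) • (Q * (1 - P) + (1 - P) * Q) with hTdef
    have hTz : ∀ z, T z = g z • v' := by
      intro z
      have e0 : T z = (2⁻¹ : ℂ) • (Q (z - P z) + (Q z - P (Q z))) := by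
        simp [hTdef, ContinuousLinearMap.mul_apply, ContinuousLinearMap.add_apply,
          ContinuousLinearMap.smul_apply, ContinuousLinearMap.sub_apply,
          ContinuousLinearMap.one_apply]
      have e1 : Q (z - P z) = 0 := by
        rw [hQz, map_sub, hPz z, map_smul, smul_eq_mul, hfg z, mul_assoc, mul_comm (f y),
          hfy, mul_one, sub_self, zero_smul]
      have e2 : P (Q z) = (g z * f y) • x := by
        rw [hQz z, hPz, map_smul, smul_eq_mul]
      rw [e0, e1, e2, hQz z, hv']
      module
    have hTT : T * T = T := h
    have hgv' : g v' = 0 := by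
      rw [hv']
      simp only [map_smul, map_sub, hgy, map_smul, smul_eq_mul]
      rw [mul_comm (f y) (g x), hfy]
      ring
    have hv'0 : v' = 0 := by
      have e : T (T y) = T y := by
        have := congrArg (fun (A : X →L[ℂ] X) => A y) hTT
        simpa [ContinuousLinearMap.mul_apply] using this
      rw [hTz y, hgy, one_smul, hTz v', hgv', zero_smul] at e
      exact e.symm
    have hyx : y = f y • x := by
      rw [hv'] at hv'0
      rcases smul_eq_zero.mp hv'0 with h1 | h2
      · norm_num at h1
      · exact sub_eq_zero.mp h2
    exact hPQ (by
      ext z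
      rw [hPz, hQz, hyx, smul_smul, ← hfg z])
  obtain ⟨u0, hgu0, hfu0⟩ := hu0ex
  -- Step 2: there exists `v ≠ 0` killed by both `f` and `g` (uses `dim ≥ 3`).
  have hvex : ∃ v : X, v ≠ 0 ∧ f v = 0 ∧ g v = 0 := by
    by_contra hcon
    push_neg at hcon
    have hc : ∀ v : X, v ≠ 0 → f v = 0 → g v ≠ 0 := hcon
    have hinj : Function.Injective (LinearMap.prod (f : X →ₗ[ℂ] ℂ) (g : X →ₗ[ℂ] ℂ)) := by
      intro a b hab
      by_contra hne
      have hsub : a - b ≠ 0 := sub_ne_zero.mpr hne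
      have h1 : f (a - b) = 0 := by
        have := congrArg Prod.fst hab
        simp only [LinearMap.prod_apply, Pi.prod] at this
        simp only [map_sub]
        simpa [sub_eq_zero] using this
      have h2 : g (a - b) = 0 := by
        have := congrArg Prod.snd hab
        simp only [LinearMap.prod_apply, Pi.prod] at this
        simp only [map_sub]
        simpa [sub_eq_zero] using this
      exact hc _ hsub h1 h2
    have hle := LinearMap.lift_rank_le_of_injective _ hinj
    simp only [rank_prod', Module.rank_self, Cardinal.lift_add, Cardinal.lift_one,
      Cardinal.lift_uzero] at hle
    have h3 : (3 : Cardinal) ≤ 1 + 1 := le_trans hdim hle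
    norm_num at h3
  obtain ⟨v, hvne, hfv, hgv⟩ := hvex
  -- Step 3: construct `u` and a functional `hh` with the right values.
  have hmain : ∃ (u : X) (hh : X →L[ℂ] ℂ),
      f u = 1 ∧ g u = 0 ∧ hh u = 1 ∧ hh y = 0 ∧ hh x ≠ 1 := by
    have hind3 : LinearIndependent ℂ ![y, u0, v] := by
      rw [Fintype.linearIndependent_iff]
      intro c hc
      have hsum : c 0 • y + c 1 • u0 + c 2 • v = 0 := by
        simpa [Fin.sum_univ_three] using hc
      have e0 : c 0 = 0 := by
        have := congrArg g hsum
        simpa [map_add, map_smul, hgy, hgu0, hgv, smul_eq_mul] using this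
      have e1 : c 1 = 0 := by
        have := congrArg f hsum
        simp only [map_add, map_smul, hfu0, hfv, smul_eq_mul, map_zero, e0, zero_smul] at this
        simpa [e0] using this
      have e2 : c 2 = 0 := by
        rw [e0, e1, zero_smul, zero_smul, zero_add, zero_add] at hsum
        exact (smul_eq_zero.mp hsum).resolve_right hvne
      intro i
      fin_cases i <;> assumption
    by_cases hx4 : ∃ a b c : ℂ, x = a • y + b • u0 + c • v
    · obtain ⟨a, b, c, hxd⟩ := hx4
      by_cases hc0 : c = 0
      · by_cases hb1 : b = 1
        · obtain ⟨hh, hhv⟩ := exists_clm_prescribed hind3 ![0, 2, -1]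
          have h0 : hh y = 0 := by simpa using hhv 0
          have h1 : hh u0 = 2 := by simpa using hhv 1
          have h2 : hh v = -1 := by simpa using hhv 2
          refine ⟨u0 + v, hh, ?_, ?_, ?_, h0, ?_⟩
          · rw [map_add, hfu0, hfv, add_zero]
          · rw [map_add, hgu0, hgv, add_zero]
          · rw [map_add, h1, h2]; ring
          · rw [hxd, map_add, map_add, map_smul, map_smul, map_smul, h0, h1, h2, hb1, hc0]
            norm_num
        · obtain ⟨hh, hhv⟩ := exists_clm_prescribed hind3 ![0, 1, 0]
          have h0 : hh y = 0 := by simpa using hhv 0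
          have h1 : hh u0 = 1 := by simpa using hhv 1
          have h2 : hh v = 0 := by simpa using hhv 2
          refine ⟨u0, hh, hfu0, hgu0, h1, h0, ?_⟩
          rw [hxd, map_add, map_add, map_smul, map_smul, map_smul, h0, h1, h2]
          simpa using hb1
      · obtain ⟨hh, hhv⟩ := exists_clm_prescribed hind3 ![0, 1, c⁻¹ * (2 - b)]
        have h0 : hh y = 0 := by simpa using hhv 0
        have h1 : hh u0 = 1 := by simpa using hhv 1
        have h2 : hh v = c⁻¹ * (2 - b) := by simpa using hhv 2
        refine ⟨u0, hh, hfu0, hgu0, h1, h0, ?_⟩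
        rw [hxd, map_add, map_add, map_smul, map_smul, map_smul, h0, h1, h2]
        rw [smul_eq_mul, smul_eq_mul, smul_eq_mul, ← mul_assoc, mul_inv_cancel₀ hc0, one_mul]
        norm_num
    · have hind4 : LinearIndependent ℂ ![y, u0, v, x] := by
        rw [Fintype.linearIndependent_iff]
        intro c hc
        have hsum : c 0 • y + c 1 • u0 + c 2 • v + c 3 • x = 0 := by
          simpa [Fin.sum_univ_four] using hc
        have e3 : c 3 = 0 := by
          by_contra hne
          apply hx4
          refine ⟨-(c 0)/(c 3), -(c 1)/(c 3), -(c 2)/(c 3), ?_⟩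
          have h' : c 3 • x = (-(c 0)) • y + (-(c 1)) • u0 + (-(c 2)) • v := by
            linear_combination (norm := module) hsum
          have h'' : x = (c 3)⁻¹ • (c 3 • x) := by
            rw [smul_smul, inv_mul_cancel₀ hne, one_smul]
          rw [h'', h']
          match_scalars <;> field_simp
        have e0 : c 0 = 0 := by
          have := congrArg g hsum
          simpa [map_add, map_smul, hgy, hgu0, hgv, e3, smul_eq_mul] using this
        have e1 : c 1 = 0 := by
          have := congrArg f hsum
          simp only [map_add, map_smul, hfu0, hfv, hfx, smul_eq_mul, map_zero, e0, e3,
            zero_mul, mul_zero, mul_one, add_zero, zero_add] at this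
          exact this
        have e2 : c 2 = 0 := by
          rw [e0, e1, e3, zero_smul, zero_smul, zero_smul, zero_add, zero_add, add_zero] at hsum
          exact (smul_eq_zero.mp hsum).resolve_right hvne
        intro i
        fin_cases i <;> assumption
      obtain ⟨hh, hhv⟩ := exists_clm_prescribed hind4 ![0, 1, 0, 2]
      have h0 : hh y = 0 := by simpa using hhv 0
      have h1 : hh u0 = 1 := by simpa using hhv 1
      have h3 : hh x = 2 := by simpa using hhv 3
      exact ⟨u0, hh, hfu0, hgu0, h1, h0, by rw [h3]; norm_num⟩
  obtain ⟨u, hh, hfu, hgu, hhu, hhy, hhx⟩ := hmain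
  -- Step 4: `R := hh.smulRight u` works.
  have hune : u ≠ 0 := by
    intro h0; rw [h0, map_zero] at hfu; exact one_ne_zero hfu.symm
  set R : X →L[ℂ] X := hh.smulRight u with hR
  have hRz : ∀ z, R z = hh z • u := fun z => rfl
  refine ⟨R, ?_, ?_, ?_, ?_⟩
  · ext z
    simp only [ContinuousLinearMap.mul_apply, hRz, map_smul, smul_eq_mul, hhu, mul_one]
  · have hrange : LinearMap.range ((R : X →L[ℂ] X) : X →ₗ[ℂ] X) = span ℂ {u} := by
      apply le_antisymm
      · rintro w ⟨z, rfl⟩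
        exact Submodule.mem_span_singleton.mpr ⟨hh z, rfl⟩
      · rw [Submodule.span_singleton_le_iff_mem]
        exact ⟨u, by simp [hRz, hhu]⟩
    rw [LinearMap.rank, hrange, rank_eq_one_iff]
    refine ⟨⟨u, Submodule.mem_span_singleton_self u⟩, ?_, ?_⟩
    · intro hcon
      exact hune (by simpa using congrArg Subtype.val hcon)
    · rintro ⟨w, hw⟩
      obtain ⟨r, hr⟩ := Submodule.mem_span_singleton.mp hw
      exact ⟨r, Subtype.ext hr⟩
  · ext z
    have e1 : Q (R z) = 0 := by
      rw [hRz, map_smul, hQz u, hgu, zero_smul, smul_zero]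
    have e2 : R (Q z) = 0 := by
      rw [hQz, map_smul, hRz y, hhy, zero_smul, smul_zero]
    simp only [ContinuousLinearMap.smul_apply, ContinuousLinearMap.add_apply,
      ContinuousLinearMap.mul_apply, e1, e2, add_zero, smul_zero,
      ContinuousLinearMap.zero_apply]
  · intro hS
    set d := hh x with hd
    set S : X →L[ℂ] X := (2⁻¹ : ℂ) • (P * R + R * P) with hSdef
    have hSz : ∀ z, S z = (2⁻¹ * hh z) • x + (2⁻¹ * (f z * d)) • u := by
      intro z
      have a1 : P (R z) = hh z • x := by
        rw [hRz, map_smul, hPz u, hfu, one_smul]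
      have a2 : R (P z) = (f z * d) • u := by
        rw [hPz, hRz, map_smul, smul_eq_mul, ← hd]
      simp only [hSdef, ContinuousLinearMap.smul_apply, ContinuousLinearMap.add_apply,
        ContinuousLinearMap.mul_apply, a1, a2]
      module
    have e0 : S (S u) = S u := by
      have := congrArg (fun (A : X →L[ℂ] X) => A u) hS
      simpa [ContinuousLinearMap.mul_apply] using this
    have hA : hh (S u) = d := by
      rw [hSz u, map_add, map_smul, map_smul, smul_eq_mul, smul_eq_mul, hhu, ← hd, hfu]
      ring
    have hB : f (S u) = 2⁻¹ + 2⁻¹ * d := by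
      rw [hSz u, map_add, map_smul, map_smul, smul_eq_mul, smul_eq_mul, hfx, hfu, hhu]
      ring
    have e1 : f (S (S u)) = f (S u) := congrArg f e0
    have e2 : hh (S (S u)) = hh (S u) := congrArg hh e0
    rw [hSz (S u), map_add, map_smul, map_smul, smul_eq_mul, smul_eq_mul, hfx, hfu,
      hA, hB] at e1
    rw [hSz (S u), map_add, map_smul, map_smul, smul_eq_mul, smul_eq_mul, hhu, ← hd,
      hA, hB] at e2
    have key : (d - 1) ^ 2 = 0 := by linear_combination 2 * e2 - 2 * e1
    have hd1 : d = 1 := by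
      have := pow_eq_zero_iff (n := 2) (by norm_num) |>.mp key
      linear_combination this
    exact hhx hd1
end

section
/- Let X be a complex Banach space of dimension at least three and let P, Q ∈ B(X) be nontrivial idempotents (idempotents different from 0 and I). The following are equivalent: (i) PQ = QP = 0; (ii) P∘Q = 0; (iii) −(P∘Q) is idempotent. -/
theorem aux12 {R : Type*} [Ring R] [Module ℂ R] [SMulCommClass ℂ R R] [IsScalarTower ℂ R R]
    (P Q : R) (hP : P*P=P) (hQ : Q*Q=Q)
    (hA : (P*Q+Q*P)*(P*Q+Q*P) = -((P*Q+Q*P)+(P*Q+Q*P))) : P*Q = 0 ∧ Q*P = 0 := by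
  have hP2 : ∀ x : R, P*(P*x) = P*x := fun x => by rw [← mul_assoc, hP]
  have hQ2 : ∀ x : R, Q*(Q*x) = Q*x := fun x => by rw [← mul_assoc, hQ]
  have e1 := congrArg (fun x => P*(x*P)) hA
  have e1' := congrArg (fun x => Q*(x*Q)) hA
  have e2 := congrArg (fun x => P*x) hA
  have e3 := congrArg (fun x => x*P) hA
  have e4 := congrArg (fun x => Q*x) hA
  simp only [mul_add, add_mul, neg_add_rev, mul_neg, neg_mul, mul_assoc, hP, hQ, hP2, hQ2] at e1 e1' e2 e3 e4
  -- 4•(PQP) = 4•(QPQ)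
  have h44 : (4:ℂ) • (P*(Q*P)) = (4:ℂ) • (Q*(P*Q)) := by
    linear_combination (norm := module) (3:ℂ) • e3 - (3:ℂ) • e4 - e1 + e1'
  have hts : P*(Q*P) = Q*(P*Q) := smul_right_injective R (by norm_num : (4:ℂ) ≠ 0) h44
  -- sandwich: PQP = PQPQP
  have h37 : P*(Q*P) = P*(Q*(P*(Q*P))) := by
    have := congrArg (fun x => P*(x*P)) hts
    simpa only [mul_assoc, hP, hQ, hP2, hQ2] using this
  -- 8•(PQP) = 0
  have h8 : (8:ℂ) • (P*(Q*P)) = 0 := by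
    linear_combination (norm := module) e1 + (3:ℂ) • h37
  have hw3 : P*(Q*P) = 0 := smul_right_injective R (by norm_num : (8:ℂ) ≠ 0) (by simpa using h8)
  have hw4 : Q*(P*Q) = 0 := hts ▸ hw3
  have hw7 : P*(Q*(P*(Q*P))) = 0 := h37 ▸ hw3
  have hw5 : P*(Q*(P*Q)) = 0 := by
    have := congrArg (fun x => P*x) hw4; simpa only [mul_zero] using this
  have hw6 : Q*(P*(Q*P)) = 0 := by
    have := congrArg (fun x => Q*x) hw3; simpa only [mul_zero] using this
  constructor
  · have h2 : (2:ℂ) • (P*Q) = 0 := by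
      linear_combination (norm := module) e2 - (2:ℂ) • hw5 - hw7 - (3:ℂ) • hw3
    exact smul_right_injective R (by norm_num : (2:ℂ) ≠ 0) (by simpa using h2)
  · have h2 : (2:ℂ) • (Q*P) = 0 := by
      linear_combination (norm := module) e3 - (2:ℂ) • hw6 - hw7 - (3:ℂ) • hw3
    exact smul_right_injective R (by norm_num : (2:ℂ) ≠ 0) (by simpa using h2)

theorem stmt_12 {X : Type*} [NormedAddCommGroup X] [NormedSpace ℂ X] [CompleteSpace X]
    (hdim : 3 ≤ Module.rank ℂ X)
    (P Q : X →L[ℂ] X)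
    (hP : P * P = P) (hP0 : P ≠ 0) (hP1 : P ≠ 1)
    (hQ : Q * Q = Q) (hQ0 : Q ≠ 0) (hQ1 : Q ≠ 1) :
    ((P * Q = 0 ∧ Q * P = 0) ↔ (2⁻¹ : ℂ) • (P * Q + Q * P) = 0) ∧
    ((P * Q = 0 ∧ Q * P = 0) ↔
      IsIdempotentElem (-((2⁻¹ : ℂ) • (P * Q + Q * P)))) := by
  constructor
  · constructor
    · rintro ⟨h1, h2⟩; rw [h1, h2]; simp
    · intro h
      have hA : P * Q + Q * P = 0 := by
        have := smul_eq_zero.mp h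
        rcases this with h' | h'
        · exact absurd h' (by norm_num)
        · exact h'
      have hP2r : ∀ x : (X →L[ℂ] X), x*P*P = x*P := fun x => by rw [mul_assoc, hP]
      have l1 := congrArg (fun x => P * x) hA
      have l2 := congrArg (fun x => x * P) hA
      simp only [mul_add, add_mul, ← mul_assoc, hP, hP2r, hQ, mul_zero, zero_mul] at l1 l2
      have h2 : (2:ℂ) • (P * Q) = 0 := by
        linear_combination (norm := module) hA + l1 - l2
      have hu : P * Q = 0 :=
        smul_right_injective _ (by norm_num : (2:ℂ) ≠ 0) (by simpa using h2)
      refine ⟨hu, ?_⟩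
      have := hA; rw [hu, zero_add] at this; exact this
  · constructor
    · rintro ⟨h1, h2⟩; rw [h1, h2]
      simp [IsIdempotentElem]
    · intro h
      unfold IsIdempotentElem at h
      have h' : (4⁻¹:ℂ) • ((P*Q+Q*P) * (P*Q+Q*P)) = -((2⁻¹:ℂ) • (P*Q+Q*P)) := by
        rw [← h]
        rw [neg_mul_neg, smul_mul_assoc, mul_smul_comm, smul_smul]
        norm_num
      have h4 : (P*Q+Q*P) * (P*Q+Q*P) = (4:ℂ) • (-((2⁻¹:ℂ) • (P*Q+Q*P))) := by
        rw [← h', smul_smul]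
        norm_num
      have hA : (P*Q+Q*P) * (P*Q+Q*P) = -((P*Q+Q*P) + (P*Q+Q*P)) := by
        rw [h4, smul_neg, smul_smul, show (4:ℂ)*2⁻¹ = 2 by norm_num, two_smul]
      exact aux12 P Q hP hQ hA
end

section
/- Let X be a complex Banach space of dimension at least three, let A, B ∈ B(X), and let λ ∈ ℂ be nonzero. Suppose that for every Y ∈ B(X) such that λY is a rank-one idempotent, A∘Y is a nonzero idempotent if and only if B∘Y is a nonzero idempotent. Then for every nonzero x ∈ X, Ax = λx if and only if Bx = λx. -/
open ContinuousLinearMap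

lemma exists_dual_pair {X : Type*} [NormedAddCommGroup X] [NormedSpace ℂ X] {x u : X}
    (h : LinearIndependent ℂ ![u, x]) : ∃ f : X →L[ℂ] ℂ, f x = 1 ∧ f u = 0 := by
  set W := Submodule.span ℂ (Set.range ![u, x]) with hW
  haveI : FiniteDimensional ℂ W := FiniteDimensional.span_of_finite ℂ (Set.finite_range _)
  let B := Module.Basis.span h
  obtain ⟨g, hg⟩ := (SeparatingDual.dualMap_surjective_iff (f := W.subtype)).mpr
    W.injective_subtype (B.coord 1)
  have hgy : ∀ i, g (![u, x] i) = B.coord 1 (B i) := by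
    intro i
    have h2 : (W.subtype.dualMap ∘ toLinearMap) g = B.coord 1 := hg
    have h3 := congrArg (fun (φ : Module.Dual ℂ W) => φ (B i)) h2
    have h4 : (B i : X) = ![u, x] i := congrArg Subtype.val (Module.Basis.span_apply h i)
    rw [← h4]
    simpa [LinearMap.dualMap_apply] using h3
  refine ⟨g, ?_, ?_⟩
  · have := hgy 1; simpa using this
  · have := hgy 0; simpa [Module.Basis.coord_apply, Module.Basis.repr_self] using this

lemma aux_13 {X : Type*} [NormedAddCommGroup X] [NormedSpace ℂ X] [CompleteSpace X]
    (A B : X →L[ℂ] X) (lam : ℂ) (hlam : lam ≠ 0)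
    (h : ∀ Y : X →L[ℂ] X,
      ((lam • Y) * (lam • Y) = lam • Y ∧
        LinearMap.rank ((lam • Y : X →L[ℂ] X) : X →ₗ[ℂ] X) = 1) →
      ((IsIdempotentElem ((2⁻¹ : ℂ) • (A * Y + Y * A)) ∧
          (2⁻¹ : ℂ) • (A * Y + Y * A) ≠ 0) →
        (IsIdempotentElem ((2⁻¹ : ℂ) • (B * Y + Y * B)) ∧
          (2⁻¹ : ℂ) • (B * Y + Y * B) ≠ 0)))
    (x : X) (hx : x ≠ 0) (hA : A x = lam • x) : B x = lam • x := by
  set u : X := B x with hu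
  set c : ℂ := 2⁻¹ * lam⁻¹ with hc
  -- main step: for each dual functional f with f x = 1, get the key equation;
  -- also record B-side idempotency data
  have main : ∀ f : X →L[ℂ] ℂ, f x = 1 →
      ((2 * f u * c ^ 2 - c) • u +
        ((f (B u) + (f u) ^ 2) * c ^ 2 - f u * c) • x = 0) ∧
      (u = 0 → False) := by
    intro f hf
    set Y : X →L[ℂ] X := lam⁻¹ • f.smulRight x with hY
    have hYlam : lam • Y = f.smulRight x := by
      rw [hY, smul_smul, mul_inv_cancel₀ hlam, one_smul]
    have hcond : (lam • Y) * (lam • Y) = lam • Y ∧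
        LinearMap.rank ((lam • Y : X →L[ℂ] X) : X →ₗ[ℂ] X) = 1 := by
      rw [hYlam]
      constructor
      · ext y
        simp [ContinuousLinearMap.mul_apply, hf, smul_smul]
      · have hrange : LinearMap.range ((f.smulRight x : X →L[ℂ] X) : X →ₗ[ℂ] X) = ℂ ∙ x := by
          apply le_antisymm
          · rintro _ ⟨y, rfl⟩
            exact Submodule.smul_mem _ _ (Submodule.mem_span_singleton_self x)
          · rw [Submodule.span_singleton_le_iff_mem]
            exact ⟨x, by simp [hf]⟩
        rw [LinearMap.rank, hrange]
        rw [← Module.finrank_eq_rank, finrank_span_singleton (K := ℂ) hx, Nat.cast_one]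
    -- A-side is a nonzero idempotent
    have hAside : IsIdempotentElem ((2⁻¹ : ℂ) • (A * Y + Y * A)) ∧
        (2⁻¹ : ℂ) • (A * Y + Y * A) ≠ 0 := by
      set g : X →L[ℂ] ℂ := (2⁻¹ : ℂ) • (f + lam⁻¹ • (f.comp A)) with hg
      have hfA : f (A x) = lam := by rw [hA, map_smul, hf, smul_eq_mul, mul_one]
      have hgx : g x = 1 := by
        simp only [hg, ContinuousLinearMap.smul_apply, ContinuousLinearMap.add_apply,
          coe_comp', Function.comp_apply, hf, hfA, smul_eq_mul, inv_mul_cancel₀ hlam]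
        norm_num
      have hSA : ∀ y, ((2⁻¹ : ℂ) • (A * Y + Y * A)) y = g y • x := by
        intro y
        simp only [smul_apply, add_apply, ContinuousLinearMap.mul_apply, hY, hg,
          ContinuousLinearMap.smul_apply, smulRight_apply, map_smul,
          ContinuousLinearMap.add_apply, coe_comp', Function.comp_apply]
        rw [hA]
        match_scalars
        field_simp
        simp only [smul_eq_mul]
        field_simp
      refine ⟨?_, ?_⟩
      · ext y
        rw [ContinuousLinearMap.mul_apply, hSA y]
        rw [map_smul, hSA x, hgx, one_smul]
      · intro h0
        apply hx
        have := hSA x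
        rw [h0, hgx] at this
        simpa using this.symm
    obtain ⟨hBidem, hBne⟩ := h Y hcond hAside
    set S : X →L[ℂ] X := (2⁻¹ : ℂ) • (B * Y + Y * B) with hS
    have hSB : ∀ y, S y = (c * f y) • u + (c * f (B y)) • x := by
      intro y
      simp only [hS, hY, smul_apply, add_apply, ContinuousLinearMap.mul_apply,
        ContinuousLinearMap.smul_apply, smulRight_apply, map_smul, hc, ← hu]
      module
    constructor
    · -- key equation from S (S x) = S x
      have hEx : S (S x) = S x := by
        conv_lhs => rw [← ContinuousLinearMap.mul_apply, hBidem]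
      rw [hSB x, hf] at hEx
      rw [map_add, map_smul, map_smul, hSB u, hSB x, hf] at hEx
      linear_combination (norm := module) hEx
    · -- if u = 0 then S is zero, contradiction
      intro hu0
      apply hBne
      have hSzero : ∀ y, S y = (c * f (B y)) • x := by
        intro y; rw [hSB y, hu0]; module
      have hfu : f u = 0 := by rw [hu0, map_zero]
      ext y
      have h2 : S (S y) = S y := by
        conv_lhs => rw [← ContinuousLinearMap.mul_apply, hBidem]
      rw [hSzero y, map_smul, hSzero x, ← hu, hfu] at h2
      rw [zero_apply, hSzero y, ← h2]
      simp
  -- now the case analysis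
  by_cases hspan : ∃ μ : ℂ, u = μ • x
  · obtain ⟨μ, hμ⟩ := hspan
    obtain ⟨f, hf⟩ := SeparatingDual.exists_eq_one (R := ℂ) hx
    obtain ⟨key, hne0⟩ := main f hf
    have hfu : f u = μ := by rw [hμ, map_smul, hf, smul_eq_mul, mul_one]
    have hfBu : f (B u) = μ ^ 2 := by
      rw [hμ, map_smul, map_smul, ← hu, hfu, smul_eq_mul]; ring
    rw [hfu, hfBu, hμ, smul_smul] at key
    have key2 : ((2 * μ * c ^ 2 - c) * μ + ((μ ^ 2 + μ ^ 2) * c ^ 2 - μ * c)) • x = 0 := by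
      rw [add_smul]; exact key
    have hs : (2 * μ * c ^ 2 - c) * μ + ((μ ^ 2 + μ ^ 2) * c ^ 2 - μ * c) = 0 :=
      (smul_eq_zero.mp key2).resolve_right hx
    have hμeq : μ = 0 ∨ μ = lam := by
      have hc0 : c ≠ 0 := by
        rw [hc]; exact mul_ne_zero (by norm_num) (inv_ne_zero hlam)
      have h4 : 2 * c * μ * (2 * c * μ - 1) = 0 := by ring_nf; ring_nf at hs; linear_combination hs
      rcases mul_eq_zero.mp h4 with h5 | h5
      · left
        rcases mul_eq_zero.mp h5 with h6 | h6
        · exact absurd h6 (by rw [hc]; intro hcc; exact hc0 (by rw [hc]; linear_combination 2⁻¹*hcc))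
        · exact h6
      · right
        have : 2 * c = lam⁻¹ := by rw [hc]; ring
        rw [this] at h5
        field_simp at h5
        try exact h5
        try linear_combination h5
    rcases hμeq with h0 | h0
    · exfalso; exact hne0 (by rw [hμ, h0, zero_smul])
    · rw [hu] at hμ ⊢ ; rw [hμ, h0]
  · -- independent case: contradiction
    exfalso
    have hind : LinearIndependent ℂ ![u, x] := by
      rw [linearIndependent_fin2]
      refine ⟨hx, fun a ha => hspan ⟨a, ha.symm⟩⟩
    obtain ⟨f, hf1, hf0⟩ := exists_dual_pair hind
    obtain ⟨key, _⟩ := main f hf1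
    rw [hf0] at key
    have hc0 : c ≠ 0 := mul_ne_zero (by norm_num) (inv_ne_zero hlam)
    have h6 : c • u = (f (B u) * c ^ 2) • x := by
      linear_combination (norm := module) -key
    have h7 : u = (f (B u) * c) • x := by
      calc u = c⁻¹ • (c • u) := by rw [smul_smul, inv_mul_cancel₀ hc0, one_smul]
        _ = c⁻¹ • ((f (B u) * c ^ 2) • x) := by rw [h6]
        _ = (f (B u) * c) • x := by
            rw [smul_smul]
            congr 1
            field_simp
    exact hspan ⟨f (B u) * c, h7⟩

theorem stmt_13 {X : Type*} [NormedAddCommGroup X] [NormedSpace ℂ X] [CompleteSpace X]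
    (hdim : 3 ≤ Module.rank ℂ X)
    (A B : X →L[ℂ] X) (lam : ℂ) (hlam : lam ≠ 0)
    (h : ∀ Y : X →L[ℂ] X,
      ((lam • Y) * (lam • Y) = lam • Y ∧
        LinearMap.rank ((lam • Y : X →L[ℂ] X) : X →ₗ[ℂ] X) = 1) →
      ((IsIdempotentElem ((2⁻¹ : ℂ) • (A * Y + Y * A)) ∧
          (2⁻¹ : ℂ) • (A * Y + Y * A) ≠ 0) ↔
        (IsIdempotentElem ((2⁻¹ : ℂ) • (B * Y + Y * B)) ∧
          (2⁻¹ : ℂ) • (B * Y + Y * B) ≠ 0))) :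
    ∀ x : X, x ≠ 0 → (A x = lam • x ↔ B x = lam • x) := by
  intro x hx
  constructor
  · exact aux_13 A B lam hlam (fun Y hY => (h Y hY).mp) x hx
  · exact aux_13 B A lam hlam (fun Y hY => (h Y hY).mpr) x hx
end

section
/- Let X be a complex Banach space of dimension at least three and let A, B ∈ B(X) be algebraic operators. Suppose that for every rank-one operator Y ∈ B(X): A∘Y is a nonzero idempotent if and only if B∘Y is a nonzero idempotent, and A∘Y = 0 if and only if B∘Y = 0. Then for every nonzero x ∈ X, Ax = 0 if and only if Bx = 0. -/
section Aux
open Polynomial ContinuousLinearMap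

variable {X : Type*} [NormedAddCommGroup X] [NormedSpace ℂ X]

lemma rank_smulRight' (f : X →L[ℂ] ℂ) (x : X) (hf : f ≠ 0) (hx : x ≠ 0) :
    LinearMap.rank ((f.smulRight x : X →L[ℂ] X) : X →ₗ[ℂ] X) = 1 := by
  obtain ⟨z, hz⟩ : ∃ z, f z ≠ 0 := by
    by_contra h; push_neg at h; exact hf (by ext z; simp [h z])
  have hrange : LinearMap.range ((f.smulRight x : X →L[ℂ] X) : X →ₗ[ℂ] X)
      = Submodule.span ℂ {x} := by
    apply le_antisymm
    · rintro y ⟨w, rfl⟩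
      simpa using Submodule.smul_mem _ (f w) (Submodule.mem_span_singleton_self x)
    · rw [Submodule.span_singleton_le_iff_mem]
      refine ⟨(f z)⁻¹ • z, ?_⟩
      simp [map_smul, smul_smul, inv_mul_cancel₀ hz]
  rw [LinearMap.rank, hrange]
  simpa using rank_span_set (R := ℂ) (M := X) (s := {x}) ((linearIndepOn_singleton_iff ℂ (v := id)).mpr hx)

lemma aeval_apply_ker (A : X →L[ℂ] X) (p : ℂ[X]) (x : X) (hx : A x = 0) :
    (aeval A p) x = p.coeff 0 • x := by
  induction p using Polynomial.induction_on' with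
  | add p q hp hq => simp [map_add, ContinuousLinearMap.add_apply, hp, hq, add_smul]
  | monomial n a =>
    rcases n with _ | n
    · simp [aeval_monomial, ContinuousLinearMap.smul_apply]
    · have hpow : (A ^ (n + 1)) x = 0 := by
        rw [pow_succ, ContinuousLinearMap.mul_apply, hx, map_zero]
      simp [aeval_monomial, ContinuousLinearMap.smul_apply, ContinuousLinearMap.mul_apply, hpow,
        coeff_monomial]

lemma key_dir (A B : X →L[ℂ] X)
    (hAalg : ∃ p : Polynomial ℂ, p ≠ 0 ∧ Polynomial.aeval A p = 0)
    (h1 : ∀ Y : X →L[ℂ] X, LinearMap.rank (Y : X →ₗ[ℂ] X) = 1 →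
      ((IsIdempotentElem ((2⁻¹ : ℂ) • (A * Y + Y * A)) ∧
          (2⁻¹ : ℂ) • (A * Y + Y * A) ≠ 0) ↔
        (IsIdempotentElem ((2⁻¹ : ℂ) • (B * Y + Y * B)) ∧
          (2⁻¹ : ℂ) • (B * Y + Y * B) ≠ 0)))
    (h2 : ∀ Y : X →L[ℂ] X, LinearMap.rank (Y : X →ₗ[ℂ] X) = 1 →
      ((2⁻¹ : ℂ) • (A * Y + Y * A) = 0 ↔ (2⁻¹ : ℂ) • (B * Y + Y * B) = 0))
    (x : X) (hx : x ≠ 0) (hAx : A x = 0) : B x = 0 := by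
  by_contra hBx
  by_cases hspan : ∃ lam : ℂ, B x = lam • x
  · -- Case i : B x is a multiple of x
    obtain ⟨lam, hlam⟩ := hspan
    have hlam0 : lam ≠ 0 := by rintro rfl; rw [zero_smul] at hlam; exact hBx hlam
    obtain ⟨g, hg⟩ := SeparatingDual.exists_eq_one (R := ℂ) hx
    set f : X →L[ℂ] ℂ := lam⁻¹ • g with hfdef
    have hfx : f x = lam⁻¹ := by simp [hfdef, hg]
    have hf0 : f ≠ 0 := by
      intro h; rw [h] at hfx; simp at hfx; exact hlam0 (by simpa using hfx.symm)
    set Y : X →L[ℂ] X := f.smulRight x with hYdef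
    have hY := rank_smulRight' f x hf0 hx
    set E : X →L[ℂ] X := (2⁻¹ : ℂ) • (A * Y + Y * A) with hEdef
    set T : X →L[ℂ] X := (2⁻¹ : ℂ) • (B * Y + Y * B) with hTdef
    have hEsq : E * E = 0 := by
      ext z
      simp [hEdef, hYdef, ContinuousLinearMap.mul_apply, ContinuousLinearMap.add_apply,
        ContinuousLinearMap.smul_apply, smulRight_apply, map_smul, map_add, hAx,
        smul_smul]
    have hnotA : ¬ (IsIdempotentElem E ∧ E ≠ 0) := by
      rintro ⟨hi, hne⟩
      exact hne (by rw [← hi.eq, hEsq])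
    have hTapp : ∀ z : X, T z = (2⁻¹ * (f z * lam + f (B z))) • x := by
      intro z
      simp [hTdef, hYdef, ContinuousLinearMap.mul_apply, ContinuousLinearMap.add_apply,
        ContinuousLinearMap.smul_apply, smulRight_apply, map_smul, hlam, smul_smul]
      module
    have hTidem : IsIdempotentElem T := by
      show T * T = T
      ext z
      rw [ContinuousLinearMap.mul_apply, hTapp, hTapp z]
      congr 1
      simp only [map_smul, hlam, hfx, smul_eq_mul]
      field_simp
      ring
    have hTne : T ≠ 0 := by
      intro h
      have hTx : (0 : X) = (2⁻¹ * (f x * lam + f (B x))) • x := by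
        rw [← hTapp x, h]; rfl
      rw [hfx, hlam, map_smul, hfx, smul_eq_mul, inv_mul_cancel₀ hlam0,
        mul_inv_cancel₀ hlam0] at hTx
      norm_num at hTx
      exact hx hTx.symm
    exact hnotA ((h1 Y hY).mpr ⟨hTidem, hTne⟩)
  · -- Case ii
    push_neg at hspan
    have hdense : ∀ f : X →L[ℂ] ℂ, (∀ z, f (A z) = 0) → f = 0 := by
      intro f hfA
      by_contra hf0
      set Y : X →L[ℂ] X := f.smulRight x with hYdef
      have hY := rank_smulRight' f x hf0 hx
      have hE0 : (2⁻¹ : ℂ) • (A * Y + Y * A) = 0 := by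
        ext z
        simp [hYdef, ContinuousLinearMap.mul_apply, ContinuousLinearMap.add_apply,
          ContinuousLinearMap.smul_apply, smulRight_apply, map_smul, hAx, hfA z]
      have hT0 := (h2 Y hY).mp hE0
      obtain ⟨z, hz⟩ : ∃ z, f z ≠ 0 := by
        by_contra h; push_neg at h; exact hf0 (by ext z; simp [h z])
      set w := (f z)⁻¹ • z with hwdef
      have hfw : f w = 1 := by simp [hwdef, inv_mul_cancel₀ hz]
      have happ := congrArg (fun (M : X →L[ℂ] X) => M w) hT0
      simp only [ContinuousLinearMap.smul_apply, ContinuousLinearMap.add_apply,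
        ContinuousLinearMap.mul_apply, hYdef, smulRight_apply, hfw, one_smul,
        ContinuousLinearMap.zero_apply] at happ
      have h2' : B x + f (B w) • x = 0 := by
        rcases smul_eq_zero.mp happ with h | h
        · norm_num at h
        · exact h
      refine hspan (-(f (B w))) ?_
      rw [neg_smul]
      exact eq_neg_of_add_eq_zero_left h2'
    have hinj : ∀ D : X →L[ℂ] X, D * A = 0 → D = 0 := by
      intro D hD
      ext w
      by_contra hw
      obtain ⟨g, hg⟩ := SeparatingDual.exists_eq_one (R := ℂ) (x := D w) hw
      have hgD : (g.comp D) = 0 := by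
        refine hdense (g.comp D) fun z => ?_
        have := congrArg (fun (M : X →L[ℂ] X) => M z) hD
        simpa using congrArg g this
      have : g (D w) = 0 := by
        have := congrArg (fun (h : X →L[ℂ] ℂ) => h w) hgD
        simpa using this
      rw [hg] at this; exact one_ne_zero this
    obtain ⟨p, hp0, hpA⟩ := hAalg
    have main : ∀ (n : ℕ) (p : ℂ[X]), p.natDegree ≤ n → p ≠ 0 → aeval A p = 0 → False := by
      intro n
      induction n with
      | zero =>
        intro p hdeg hp0 hpA
        have h0 : p.coeff 0 ≠ 0 := by
          intro hc
          apply hp0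
          have := Polynomial.eq_C_of_natDegree_eq_zero (Nat.le_zero.mp hdeg)
          rw [this, hc, map_zero]
        have hsz : p.coeff 0 • x = 0 := by
          rw [← aeval_apply_ker A p x hAx, hpA]; simp
        rcases smul_eq_zero.mp hsz with h | h
        · exact h0 h
        · exact hx h
      | succ n ih =>
        intro p hdeg hp0 hpA
        by_cases h0 : p.coeff 0 = 0
        · have hdiv0 : p.divX ≠ 0 := by
            intro h
            apply hp0
            have := p.divX_mul_X_add
            rw [h, h0] at this
            simpa using this.symm
          have hDA : aeval A p.divX * A = 0 := by
            have hrw := p.divX_mul_X_add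
            rw [← hrw, map_add, map_mul, aeval_X, aeval_C, h0, map_zero, add_zero] at hpA
            simpa using hpA
          have hD0 := hinj _ hDA
          exact ih p.divX (by
            have := p.natDegree_divX_eq_natDegree_tsub_one
            omega) hdiv0 hD0
        · have hsz : p.coeff 0 • x = 0 := by
            rw [← aeval_apply_ker A p x hAx, hpA]; simp
          rcases smul_eq_zero.mp hsz with h | h
          · exact h0 h
          · exact hx h
    exact main p.natDegree p le_rfl hp0 hpA

end Aux

theorem stmt_14 {X : Type*} [NormedAddCommGroup X] [NormedSpace ℂ X] [CompleteSpace X]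
    (hdim : 3 ≤ Module.rank ℂ X)
    (A B : X →L[ℂ] X)
    (hAalg : ∃ p : Polynomial ℂ, p ≠ 0 ∧ Polynomial.aeval A p = 0)
    (hBalg : ∃ p : Polynomial ℂ, p ≠ 0 ∧ Polynomial.aeval B p = 0)
    (h1 : ∀ Y : X →L[ℂ] X, LinearMap.rank (Y : X →ₗ[ℂ] X) = 1 →
      ((IsIdempotentElem ((2⁻¹ : ℂ) • (A * Y + Y * A)) ∧
          (2⁻¹ : ℂ) • (A * Y + Y * A) ≠ 0) ↔
        (IsIdempotentElem ((2⁻¹ : ℂ) • (B * Y + Y * B)) ∧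
          (2⁻¹ : ℂ) • (B * Y + Y * B) ≠ 0)))
    (h2 : ∀ Y : X →L[ℂ] X, LinearMap.rank (Y : X →ₗ[ℂ] X) = 1 →
      ((2⁻¹ : ℂ) • (A * Y + Y * A) = 0 ↔ (2⁻¹ : ℂ) • (B * Y + Y * B) = 0)) :
    ∀ x : X, x ≠ 0 → (A x = 0 ↔ B x = 0) := by
  intro x hx
  constructor
  · exact key_dir A B hAalg h1 h2 x hx
  · exact key_dir B A hBalg (fun Y hY => (h1 Y hY).symm) (fun Y hY => (h2 Y hY).symm) x hx
end

section
/- Let n ≥ 2 and let A ∈ Mₙ(ℂ) be a matrix whose spectrum consists of exactly one point, which is nonzero. Suppose that for some nonzero λ ∈ ℂ and for every k = 1, 2, …, n−1 and every k×(n−k) complex matrix R of rank at most one, the matrix A∘T_{k,R} is a nonzero idempotent, where T_{k,R} is the n×n block matrix with blocks J_k(λ)⁻¹ (top left), R (top right), 0 (bottom left), and 0 (bottom right). Then A e_k = J_n(λ) e_k for k = 1, 2, …, n−1, where e_k is the k-th standard basis vector of ℂⁿ. -/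
open Matrix

noncomputable def jordanBlock (k : ℕ) (lam : ℂ) : Matrix (Fin k) (Fin k) ℂ :=
  Matrix.of fun i j => if (i : ℕ) = (j : ℕ) then lam
    else if (i : ℕ) + 1 = (j : ℕ) then 1 else 0

lemma jordanBlock_det (m : ℕ) (lam : ℂ) : (jordanBlock m lam).det = lam ^ m := by
  rw [Matrix.det_of_upperTriangular]
  · simp [jordanBlock]
  · intro i j hij
    have : (j : ℕ) < (i : ℕ) := hij
    simp only [jordanBlock, of_apply]
    rw [if_neg (by omega), if_neg (by omega)]

lemma jordanBlock_sub_entry (m : ℕ) (lam : ℂ) (i j : Fin m) :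
    (jordanBlock m lam - lam • 1) i j = if (i : ℕ) + 1 = (j : ℕ) then 1 else 0 := by
  simp only [Matrix.sub_apply, jordanBlock, of_apply, Matrix.smul_apply, Matrix.one_apply,
    smul_ite, smul_zero, smul_eq_mul, mul_one]
  by_cases h : (i : ℕ) = (j : ℕ)
  · rw [if_pos h, if_pos (Fin.ext h), if_neg (by omega : ¬ (i : ℕ) + 1 = (j : ℕ))]
    ring
  · rw [if_neg h, if_neg (fun hh => h (congrArg Fin.val hh))]
    ring

lemma jordanBlock_nilp (m : ℕ) (lam : ℂ) : (jordanBlock m lam - lam • 1) ^ m = 0 := by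
  have key : ∀ p : ℕ, ∀ i j : Fin m,
      (j : ℕ) < (i : ℕ) + p → ((jordanBlock m lam - lam • 1) ^ p) i j = 0 := by
    intro p
    induction p with
    | zero =>
      intro i j hij
      rw [pow_zero, Matrix.one_apply_ne (by intro hh; subst hh; omega)]
    | succ p ih =>
      intro i j hij
      rw [pow_succ, Matrix.mul_apply]
      apply Finset.sum_eq_zero
      intro t _
      rw [jordanBlock_sub_entry]
      by_cases ht : (t : ℕ) + 1 = (j : ℕ)
      · rw [ih i t (by omega)]; ring
      · rw [if_neg ht]; ring
  ext i j
  rw [key m i j (by omega)]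
  simp

lemma sylvester {m : ℕ} {lam : ℂ} (hlam : lam ≠ 0) (C : Matrix (Fin m) (Fin m) ℂ)
    (hrel : C * jordanBlock m lam + jordanBlock m lam * C = 0) : C = 0 := by
  set N := jordanBlock m lam - lam • 1 with hNdef
  have hJ : jordanBlock m lam = N + lam • 1 := by rw [hNdef, sub_add_cancel]
  have hrel' : N * C + C * N = (-(2 * lam)) • C := by
    have h1 : C * (N + lam • 1) + (N + lam • 1) * C = 0 := by rw [← hJ]; exact hrel
    have h2 : C * N + C * (lam • 1) + (N * C + (lam • 1) * C) = 0 := by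
      rw [← h1]; noncomm_ring
    have h3 : C * (lam • 1) = lam • C := by rw [Matrix.mul_smul, mul_one]
    have h4 : (lam • 1) * C = lam • C := by rw [Matrix.smul_mul, one_mul]
    rw [h3, h4] at h2
    have h5 : (N * C + C * N) + (lam • C + lam • C) = 0 := by rw [← h2]; abel
    have h6 : N * C + C * N = -(lam • C + lam • C) := eq_neg_of_add_eq_zero_left h5
    rw [h6]
    module
  set f : Matrix (Fin m) (Fin m) ℂ →ₗ[ℂ] Matrix (Fin m) (Fin m) ℂ :=
    LinearMap.mulLeft ℂ N + LinearMap.mulRight ℂ N with hfdef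
  have hNnil : IsNilpotent N := ⟨m, jordanBlock_nilp m lam⟩
  have hfnil : IsNilpotent f := by
    apply Commute.isNilpotent_add (LinearMap.commute_mulLeft_right N N)
    · rwa [LinearMap.isNilpotent_mulLeft_iff]
    · rwa [LinearMap.isNilpotent_mulRight_iff]
  obtain ⟨K, hK⟩ := hfnil
  have hfC : f C = (-(2 * lam)) • C := by
    simp only [hfdef, LinearMap.add_apply, LinearMap.mulLeft_apply, LinearMap.mulRight_apply]
    exact hrel'
  have hne : (-(2 * lam)) ≠ 0 := by
    simp only [ne_eq, neg_eq_zero, mul_eq_zero]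
    push_neg
    exact ⟨two_ne_zero, hlam⟩
  have key : ∀ p : ℕ, C = ((-(2 * lam))⁻¹) ^ p • ((f ^ p) C) := by
    intro p
    induction p with
    | zero => simp
    | succ p ih =>
      have h1 : (f ^ (p + 1)) C = (f ^ p) (f C) := by rw [pow_succ, Module.End.mul_apply]
      rw [h1, hfC, _root_.map_smul, smul_smul, pow_succ, mul_assoc,
        inv_mul_cancel₀ hne, mul_one]
      exact ih
  have := key K
  rw [hK] at this
  simpa using this

theorem stmt_16 {n : ℕ} (hn : 2 ≤ n)
    (A : Matrix (Fin n) (Fin n) ℂ)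
    (μ : ℂ) (hμ : μ ≠ 0) (hspec : spectrum ℂ A = {μ})
    (lam : ℂ) (hlam : lam ≠ 0)
    (h : ∀ (k : ℕ) (_ : 1 ≤ k) (hk2 : k ≤ n - 1)
      (R : Matrix (Fin k) (Fin (n - k)) ℂ), R.rank ≤ 1 →
      IsIdempotentElem ((2⁻¹ : ℂ) •
        (A * (Matrix.reindex
            (finSumFinEquiv.trans (finCongr (Nat.add_sub_cancel' (hk2.trans (Nat.sub_le n 1)))))
            (finSumFinEquiv.trans (finCongr (Nat.add_sub_cancel' (hk2.trans (Nat.sub_le n 1)))))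
            (Matrix.fromBlocks (jordanBlock k lam)⁻¹ R 0 0)) +
          (Matrix.reindex
            (finSumFinEquiv.trans (finCongr (Nat.add_sub_cancel' (hk2.trans (Nat.sub_le n 1)))))
            (finSumFinEquiv.trans (finCongr (Nat.add_sub_cancel' (hk2.trans (Nat.sub_le n 1)))))
            (Matrix.fromBlocks (jordanBlock k lam)⁻¹ R 0 0)) * A)) ∧
      (2⁻¹ : ℂ) •
        (A * (Matrix.reindex
            (finSumFinEquiv.trans (finCongr (Nat.add_sub_cancel' (hk2.trans (Nat.sub_le n 1)))))
            (finSumFinEquiv.trans (finCongr (Nat.add_sub_cancel' (hk2.trans (Nat.sub_le n 1)))))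
            (Matrix.fromBlocks (jordanBlock k lam)⁻¹ R 0 0)) +
          (Matrix.reindex
            (finSumFinEquiv.trans (finCongr (Nat.add_sub_cancel' (hk2.trans (Nat.sub_le n 1)))))
            (finSumFinEquiv.trans (finCongr (Nat.add_sub_cancel' (hk2.trans (Nat.sub_le n 1)))))
            (Matrix.fromBlocks (jordanBlock k lam)⁻¹ R 0 0)) * A) ≠ 0) :
    ∀ k : Fin n, (k : ℕ) < n - 1 →
      A.mulVec (Pi.single k 1) = (jordanBlock n lam).mulVec (Pi.single k 1) := by
  obtain ⟨m, rfl⟩ : ∃ m, n = m + 1 := ⟨n - 1, by omega⟩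
  have hm1 : 1 ≤ m := by omega
  have hk2 : m ≤ m + 1 - 1 := by omega
  set e : Fin m ⊕ Fin (m + 1 - m) ≃ Fin (m + 1) :=
    finSumFinEquiv.trans (finCongr (Nat.add_sub_cancel' (hk2.trans (Nat.sub_le (m+1) 1))))
    with hedef
  have he1 : ∀ x : Fin m, e (Sum.inl x) = Fin.castSucc x := by
    intro x
    apply Fin.ext
    simp [hedef, Equiv.trans_apply, finCongr_apply]
  have he2 : ∀ y : Fin (m + 1 - m), e (Sum.inr y) = Fin.last m := by
    intro y
    have hy : (y : ℕ) < m + 1 - m := y.2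
    apply Fin.ext
    simp only [hedef, Equiv.trans_apply, finCongr_apply, finSumFinEquiv_apply_right,
      Fin.coe_cast, Fin.coe_natAdd, Fin.val_last]
    omega
  have hes1 : ∀ x : Fin m, e.symm (Fin.castSucc x) = Sum.inl x := by
    intro x; rw [← he1, Equiv.symm_apply_apply]
  have hes2 : e.symm (Fin.last m) = Sum.inr ⟨0, by omega⟩ := by
    rw [← he2 ⟨0, by omega⟩, Equiv.symm_apply_apply]
  set J : Matrix (Fin m) (Fin m) ℂ := jordanBlock m lam with hJdef
  set T0 : Matrix (Fin (m+1)) (Fin (m+1)) ℂ := reindex e e (fromBlocks J⁻¹ 0 0 0) with hT0def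
  set Sm : (Fin m → ℂ) → Matrix (Fin (m+1)) (Fin (m+1)) ℂ :=
    fun r => reindex e e (fromBlocks 0 (Matrix.of fun i (_ : Fin (m+1-m)) => r i) 0 0) with hSmdef
  have hmain : ∀ r : Fin m → ℂ,
      IsIdempotentElem ((2⁻¹:ℂ) • (A * (T0 + Sm r) + (T0 + Sm r) * A)) := by
    intro r
    have hR : (Matrix.of fun i (_ : Fin (m+1-m)) => r i : Matrix (Fin m) (Fin (m+1-m)) ℂ).rank ≤ 1 := by
      refine le_trans (Matrix.rank_le_card_width _) ?_
      simp only [Fintype.card_fin]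
      omega
    have hh := h m hm1 hk2 (Matrix.of fun i _ => r i) hR
    have hsplit : (reindex e e
        (fromBlocks J⁻¹ (Matrix.of fun i (_ : Fin (m+1-m)) => r i) 0 0) :
          Matrix (Fin (m+1)) (Fin (m+1)) ℂ) = T0 + Sm r := by
      rw [hT0def, hSmdef]
      ext i j
      simp only [Matrix.add_apply, reindex_apply, submatrix_apply]
      rcases e.symm i with x | x <;> rcases e.symm j with y | y <;>
        simp [Matrix.fromBlocks]
    rw [hsplit] at hh
    exact hh.1
  -- entry lemmas
  have hT0a : ∀ x y : Fin m, T0 (Fin.castSucc x) (Fin.castSucc y) = J⁻¹ x y := by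
    intro x y
    rw [hT0def]
    simp [reindex_apply, submatrix_apply, hes1]
  have hT0row : ∀ j, T0 (Fin.last m) j = 0 := by
    intro j
    rw [hT0def]
    simp only [reindex_apply, submatrix_apply, hes2]
    rcases e.symm j with y | y <;> simp [Matrix.fromBlocks]
  have hT0col : ∀ i, T0 i (Fin.last m) = 0 := by
    intro i
    rw [hT0def]
    simp only [reindex_apply, submatrix_apply, hes2]
    rcases e.symm i with y | y <;> simp [Matrix.fromBlocks]
  have hSa : ∀ (r : Fin m → ℂ) (x : Fin m), Sm r (Fin.castSucc x) (Fin.last m) = r x := by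
    intro r x
    rw [hSmdef]
    simp [reindex_apply, submatrix_apply, hes1, hes2, Matrix.fromBlocks]
  have hScol : ∀ (r : Fin m → ℂ) i (y : Fin m), Sm r i (Fin.castSucc y) = 0 := by
    intro r i y
    rw [hSmdef]
    simp only [reindex_apply, submatrix_apply, hes1]
    rcases e.symm i with x | x <;> simp [Matrix.fromBlocks]
  have hSrow : ∀ (r : Fin m → ℂ) j, Sm r (Fin.last m) j = 0 := by
    intro r j
    rw [hSmdef]
    simp only [reindex_apply, submatrix_apply, hes2]
    rcases e.symm j with y | y <;> simp [Matrix.fromBlocks]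
  have hSneg : ∀ r : Fin m → ℂ, Sm (-r) = - Sm r := by
    intro r
    rw [hSmdef]
    ext i j
    simp only [reindex_apply, submatrix_apply, Matrix.neg_apply]
    rcases e.symm i with x | x <;> rcases e.symm j with y | y <;> simp [Matrix.fromBlocks]
  have hS0 : Sm 0 = 0 := by
    rw [hSmdef]
    ext i j
    simp only [reindex_apply, submatrix_apply, Matrix.zero_apply]
    rcases e.symm i with x | x <;> rcases e.symm j with y | y <;> simp [Matrix.fromBlocks]
  set M0 : Matrix (Fin (m+1)) (Fin (m+1)) ℂ := (2⁻¹:ℂ) • (A * T0 + T0 * A) with hM0def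
  set Lr : (Fin m → ℂ) → Matrix (Fin (m+1)) (Fin (m+1)) ℂ :=
    fun r => (2⁻¹:ℂ) • (A * Sm r + Sm r * A) with hLrdef
  have hMsplit : ∀ r, (2⁻¹:ℂ) • (A * (T0 + Sm r) + (T0 + Sm r) * A) = M0 + Lr r := by
    intro r
    rw [hM0def, hLrdef]
    simp only [mul_add, add_mul, smul_add]
    abel
  have hM0idem : M0 * M0 = M0 := by
    have h0 := hmain 0
    rw [hS0, add_zero, ← hM0def] at h0
    exact h0
  have hLneg : ∀ r, Lr (-r) = - Lr r := by
    intro r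
    rw [hLrdef]
    simp only [hSneg, mul_neg, neg_mul, ← neg_add, smul_neg]
  have hidem : ∀ r, (M0 + Lr r) * (M0 + Lr r) = M0 + Lr r := by
    intro r
    have hh := hmain r
    rw [hMsplit] at hh
    exact hh
  have hLL : ∀ r, Lr r * Lr r = 0 := by
    intro r
    have hp := hidem r
    have hm2 := hidem (-r)
    rw [hLneg] at hm2
    have hkey : Lr r * Lr r + Lr r * Lr r =
        ((M0 + Lr r) * (M0 + Lr r) + (M0 + -Lr r) * (M0 + -Lr r)) - (M0 * M0 + M0 * M0) := by
      noncomm_ring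
    rw [hp, hm2, hM0idem] at hkey
    have hz : Lr r * Lr r + Lr r * Lr r = 0 := by rw [hkey]; abel
    have h2 : (2:ℂ) • (Lr r * Lr r) = 0 := by rw [two_smul]; exact hz
    rcases smul_eq_zero.mp h2 with h' | h'
    · exact absurd h' two_ne_zero
    · exact h'
  -- entries of Lr for a single basis vector
  have hASlem : ∀ (q : Fin m) i j, (A * Sm (Pi.single q 1)) i j =
      if j = Fin.last m then A i (Fin.castSucc q) else 0 := by
    intro q i j
    rw [Matrix.mul_apply]
    cases j using Fin.lastCases with
    | last =>
      rw [if_pos rfl, Fin.sum_univ_castSucc, hSrow, mul_zero, add_zero]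
      simp only [hSa]
      rw [Finset.sum_eq_single q]
      · simp
      · intro b _ hb
        rw [Pi.single_eq_of_ne hb, mul_zero]
      · intro hq; exact absurd (Finset.mem_univ q) hq
    | cast y =>
      rw [if_neg (Fin.castSucc_lt_last y).ne]
      apply Finset.sum_eq_zero
      intro t _
      rw [hScol, mul_zero]
  have hSAlem : ∀ (q : Fin m) i j, (Sm (Pi.single q 1) * A) i j =
      if i = Fin.castSucc q then A (Fin.last m) j else 0 := by
    intro q i j
    rw [Matrix.mul_apply]
    cases i using Fin.lastCases with
    | last =>
      rw [if_neg (Fin.castSucc_lt_last q).ne']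
      apply Finset.sum_eq_zero
      intro t _
      rw [hSrow, zero_mul]
    | cast x =>
      rw [Fin.sum_univ_castSucc]
      have hz : ∀ t' : Fin m, Sm (Pi.single q 1) (Fin.castSucc x) (Fin.castSucc t') *
          A (Fin.castSucc t') j = 0 := fun t' => by rw [hScol, zero_mul]
      rw [Finset.sum_eq_zero (fun t' _ => hz t'), zero_add, hSa, Pi.single_apply]
      by_cases hxq : x = q
      · rw [if_pos hxq, if_pos (by rw [hxq]), one_mul]
      · rw [if_neg hxq, if_neg (fun hh => hxq (Fin.castSucc_inj.mp hh)), zero_mul]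
  have hLentry : ∀ (q : Fin m) i j, Lr (Pi.single q 1) i j =
      2⁻¹ * ((if j = Fin.last m then A i (Fin.castSucc q) else 0) +
        (if i = Fin.castSucc q then A (Fin.last m) j else 0)) := by
    intro q i j
    rw [hLrdef]
    simp only [Matrix.smul_apply, Matrix.add_apply, smul_eq_mul, hASlem, hSAlem]
  have hc : ∀ q : Fin m, A (Fin.last m) (Fin.castSucc q) = 0 := by
    intro q
    have hzero := hLL (Pi.single q 1)
    have hent : (Lr (Pi.single q 1) * Lr (Pi.single q 1)) (Fin.castSucc q) (Fin.castSucc q)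
        = 0 := by rw [hzero]; rfl
    rw [Matrix.mul_apply, Finset.sum_eq_single (Fin.castSucc q)] at hent
    · rw [hLentry, if_neg (Fin.castSucc_lt_last q).ne, if_pos rfl] at hent
      have h2 : A (Fin.last m) (Fin.castSucc q) * A (Fin.last m) (Fin.castSucc q) = 0 := by
        linear_combination 4 * hent
      exact mul_self_eq_zero.mp h2
    · intro t _ ht
      rw [hLentry q t (Fin.castSucc q), if_neg (Fin.castSucc_lt_last q).ne, if_neg ht]
      simp
    · intro hq; exact absurd (Finset.mem_univ _) hq
  -- block pieces of A
  set d : ℂ := A (Fin.last m) (Fin.last m) with hddef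
  set B : Matrix (Fin m) (Fin m) ℂ :=
    Matrix.of (fun i j => A (Fin.castSucc i) (Fin.castSucc j)) with hBdef
  set N : Matrix (Fin m) (Fin m) ℂ :=
    Matrix.of (fun i j => M0 (Fin.castSucc i) (Fin.castSucc j)) with hNdef
  have hAlastentry : ∀ j : Fin (m+1), A (Fin.last m) j = if j = Fin.last m then d else 0 := by
    intro j
    cases j using Fin.lastCases with
    | last => rw [if_pos rfl]
    | cast y => rw [if_neg (Fin.castSucc_lt_last y).ne, hc]
  have hLentry2 : ∀ (q : Fin m) (i t : Fin (m+1)), Lr (Pi.single q 1) i t =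
      if t = Fin.last m then
        2⁻¹ * (A i (Fin.castSucc q) + (if i = Fin.castSucc q then d else 0)) else 0 := by
    intro q i t
    rw [hLentry, hAlastentry]
    by_cases ht : t = Fin.last m
    · subst ht
      simp
    · simp [ht]
  have hM0row : ∀ j, M0 (Fin.last m) j = 0 := by
    intro j
    rw [hM0def]
    simp only [Matrix.smul_apply, Matrix.add_apply, smul_eq_mul]
    have h1 : (A * T0) (Fin.last m) j = 0 := by
      rw [Matrix.mul_apply, Fin.sum_univ_castSucc, hT0row, mul_zero, add_zero]
      apply Finset.sum_eq_zero
      intro t _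
      rw [hc, zero_mul]
    have h2 : (T0 * A) (Fin.last m) j = 0 := by
      rw [Matrix.mul_apply]
      apply Finset.sum_eq_zero
      intro t _
      rw [hT0row, zero_mul]
    rw [h1, h2]
    ring
  have hLM0 : ∀ (q : Fin m) i j, (Lr (Pi.single q 1) * M0) i j = 0 := by
    intro q i j
    rw [Matrix.mul_apply]
    apply Finset.sum_eq_zero
    intro t _
    by_cases ht : t = Fin.last m
    · subst ht
      rw [hM0row, mul_zero]
    · rw [hLentry2, if_neg ht, zero_mul]
  have hrel : ∀ q : Fin m, M0 * Lr (Pi.single q 1) + Lr (Pi.single q 1) * M0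
      = Lr (Pi.single q 1) := by
    intro q
    have hp := hidem (Pi.single q 1)
    have hkey : M0 * Lr (Pi.single q 1) + Lr (Pi.single q 1) * M0 =
        ((M0 + Lr (Pi.single q 1)) * (M0 + Lr (Pi.single q 1))) - M0 * M0 -
          Lr (Pi.single q 1) * Lr (Pi.single q 1) := by noncomm_ring
    rw [hp, hM0idem, hLL] at hkey
    rw [hkey]
    abel
  have hNB : N * (B + d • (1 : Matrix (Fin m) (Fin m) ℂ)) = B + d • 1 := by
    ext i' q
    have h3 : (M0 * Lr (Pi.single q 1) + Lr (Pi.single q 1) * M0)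
          (Fin.castSucc i') (Fin.last m)
        = Lr (Pi.single q 1) (Fin.castSucc i') (Fin.last m) := by rw [hrel q]
    rw [Matrix.add_apply, hLM0, add_zero, Matrix.mul_apply] at h3
    simp only [hLentry2, if_pos] at h3
    rw [Fin.sum_univ_castSucc, hc q, if_neg (Fin.castSucc_lt_last q).ne'] at h3
    simp only [add_zero, mul_zero, Fin.castSucc_inj] at h3
    have h4 : ∀ t' : Fin m, M0 (Fin.castSucc i') (Fin.castSucc t') *
        (2⁻¹ * (A (Fin.castSucc t') (Fin.castSucc q) + if t' = q then d else 0)) =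
        2⁻¹ * (M0 (Fin.castSucc i') (Fin.castSucc t') *
          (A (Fin.castSucc t') (Fin.castSucc q) + if t' = q then d else 0)) := fun _ => by ring
    rw [Finset.sum_congr rfl (fun t' _ => h4 t'), ← Finset.mul_sum] at h3
    have h5 := mul_left_cancel₀ (inv_ne_zero (two_ne_zero (α := ℂ))) h3
    rw [Matrix.mul_apply]
    simp only [hNdef, hBdef, Matrix.of_apply, Matrix.add_apply, Matrix.smul_apply,
      Matrix.one_apply, smul_eq_mul, mul_ite, mul_one, mul_zero]
    exact h5
  have hNform : N = (2⁻¹ : ℂ) • (B * J⁻¹ + J⁻¹ * B) := by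
    ext i j
    have h1 : (A * T0) (Fin.castSucc i) (Fin.castSucc j) = (B * J⁻¹) i j := by
      rw [Matrix.mul_apply, Fin.sum_univ_castSucc, hT0row, mul_zero, add_zero,
        Matrix.mul_apply]
      apply Finset.sum_congr rfl
      intro t _
      rw [hT0a, hBdef]
      rfl
    have h2 : (T0 * A) (Fin.castSucc i) (Fin.castSucc j) = (J⁻¹ * B) i j := by
      rw [Matrix.mul_apply, Fin.sum_univ_castSucc, hT0col, zero_mul, add_zero,
        Matrix.mul_apply]
      apply Finset.sum_congr rfl
      intro t _
      rw [hT0a, hBdef]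
      rfl
    rw [hNdef]
    simp only [Matrix.of_apply, Matrix.smul_apply, Matrix.add_apply, smul_eq_mul]
    rw [hM0def]
    simp only [Matrix.smul_apply, Matrix.add_apply, smul_eq_mul]
    rw [h1, h2]
  have hd : d = μ := by
    have hmem : d ∈ spectrum ℂ A := by
      rw [spectrum.mem_iff]
      intro hunit
      rw [Matrix.isUnit_iff_isUnit_det] at hunit
      have hdet : (algebraMap ℂ (Matrix (Fin (m+1)) (Fin (m+1)) ℂ) d - A).det = 0 := by
        apply Matrix.det_eq_zero_of_row_eq_zero (Fin.last m)
        intro j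
        rw [Matrix.sub_apply, Matrix.algebraMap_matrix_apply, hAlastentry]
        by_cases hj : Fin.last m = j
        · rw [if_pos hj, if_pos hj.symm]
          simp
        · rw [if_neg hj, if_neg (fun hh => hj hh.symm)]
          ring
      rw [hdet] at hunit
      exact not_isUnit_zero hunit
    rw [hspec, Set.mem_singleton_iff] at hmem
    exact hmem
  have hBunit : IsUnit (B + μ • (1 : Matrix (Fin m) (Fin m) ℂ)).det := by
    by_contra hdetu
    have hdet0 : (B + μ • (1 : Matrix (Fin m) (Fin m) ℂ)).det = 0 := by
      by_contra h0
      exact hdetu (isUnit_iff_ne_zero.mpr h0)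
    obtain ⟨v0, hv0ne, hv0⟩ := (Matrix.exists_mulVec_eq_zero_iff).mpr hdet0
    set w : Fin (m+1) → ℂ := Fin.snoc v0 0 with hwdef
    have hwver : (A + μ • 1).mulVec w = 0 := by
      funext i
      simp only [Matrix.mulVec, dotProduct, Pi.zero_apply]
      rw [Fin.sum_univ_castSucc]
      cases i using Fin.lastCases with
      | last =>
        have hz : ∀ t' : Fin m, (A + μ • (1 : Matrix (Fin (m+1)) (Fin (m+1)) ℂ))
            (Fin.last m) (Fin.castSucc t') * w (Fin.castSucc t') = 0 := by
          intro t'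
          rw [Matrix.add_apply, Matrix.smul_apply, hc,
            Matrix.one_apply_ne (Fin.castSucc_lt_last t').ne', smul_zero, add_zero, zero_mul]
        rw [Finset.sum_eq_zero (fun t' _ => hz t'), zero_add, hwdef, Fin.snoc_last, mul_zero]
      | cast i' =>
        have hz : ∀ t' : Fin m, (A + μ • (1 : Matrix (Fin (m+1)) (Fin (m+1)) ℂ))
            (Fin.castSucc i') (Fin.castSucc t') * w (Fin.castSucc t') =
            (B + μ • (1 : Matrix (Fin m) (Fin m) ℂ)) i' t' * v0 t' := by
          intro t'
          rw [hwdef, Fin.snoc_castSucc, Matrix.add_apply, Matrix.smul_apply,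
            Matrix.add_apply, Matrix.smul_apply, hBdef]
          simp only [Matrix.of_apply, Matrix.one_apply, Fin.castSucc_inj, smul_eq_mul]
        rw [Finset.sum_congr rfl (fun t' _ => hz t'), hwdef, Fin.snoc_last, mul_zero, add_zero]
        have := congrFun hv0 i'
        simpa [Matrix.mulVec, dotProduct] using this
    have hw0 : w ≠ 0 := by
      intro hw
      apply hv0ne
      funext t
      have := congrFun hw (Fin.castSucc t)
      rwa [hwdef, Fin.snoc_castSucc, Pi.zero_apply] at this
    have hdetA : (A + μ • 1).det = 0 := Matrix.exists_mulVec_eq_zero_iff.mp ⟨w, hw0, hwver⟩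
    have hmem : -μ ∈ spectrum ℂ A := by
      rw [spectrum.mem_iff]
      intro hunit
      have heq : algebraMap ℂ (Matrix (Fin (m+1)) (Fin (m+1)) ℂ) (-μ) - A
          = -(A + μ • 1) := by
        rw [Algebra.algebraMap_eq_smul_one]
        module
      rw [heq, Matrix.isUnit_iff_isUnit_det, Matrix.det_neg, hdetA, mul_zero] at hunit
      exact not_isUnit_zero hunit
    rw [hspec, Set.mem_singleton_iff] at hmem
    apply hμ
    linear_combination (-1/2 : ℂ) * hmem
  have hNB' : N * (B + μ • 1) = B + μ • 1 := by rw [← hd]; exact hNB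
  have hinv : (B + μ • 1) * (B + μ • 1)⁻¹ = 1 := Matrix.mul_nonsing_inv _ hBunit
  have hN1 : N = 1 := by
    calc N = N * ((B + μ • 1) * (B + μ • 1)⁻¹) := by rw [hinv, mul_one]
      _ = (N * (B + μ • 1)) * (B + μ • 1)⁻¹ := by rw [mul_assoc]
      _ = (B + μ • 1) * (B + μ • 1)⁻¹ := by rw [hNB']
      _ = 1 := hinv
  have hJdet : IsUnit J.det := by
    rw [hJdef, jordanBlock_det]
    exact isUnit_iff_ne_zero.mpr (pow_ne_zero _ hlam)
  have hJi1 : J * J⁻¹ = 1 := Matrix.mul_nonsing_inv _ hJdet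
  have hJi2 : J⁻¹ * J = 1 := Matrix.nonsing_inv_mul _ hJdet
  have hsum2 : B * J⁻¹ + J⁻¹ * B = (2 : ℂ) • (1 : Matrix (Fin m) (Fin m) ℂ) := by
    have h6 : (2 : ℂ) • N = (2 : ℂ) • (1 : Matrix (Fin m) (Fin m) ℂ) := by rw [hN1]
    rw [hNform, smul_smul, show (2 : ℂ) * 2⁻¹ = 1 by norm_num, one_smul] at h6
    exact h6
  have hJB : (B - J) * J + J * (B - J) = 0 := by
    have h7 : J * (B * J⁻¹ + J⁻¹ * B) * J = J * ((2 : ℂ) • 1) * J := by rw [hsum2]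
    have h8 : J * (B * J⁻¹ + J⁻¹ * B) * J = J * B * (J⁻¹ * J) + (J * J⁻¹) * (B * J) := by
      noncomm_ring
    rw [h8, hJi1, hJi2, mul_one, one_mul] at h7
    have h9 : J * ((2 : ℂ) • (1 : Matrix (Fin m) (Fin m) ℂ)) * J = (2 : ℂ) • (J * J) := by
      rw [mul_smul_comm, smul_mul_assoc, mul_one]
    rw [h9] at h7
    have h10 : (B - J) * J + J * (B - J) = (J * B + B * J) - ((2 : ℂ) • (J * J)) := by
      rw [two_smul]
      noncomm_ring
    rw [h10, h7, sub_self]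
  rw [hJdef] at hJB
  have hBJ : B = jordanBlock m lam := sub_eq_zero.mp (sylvester hlam (B - jordanBlock m lam) hJB)
  -- conclusion
  intro k hk
  have hkm : (k : ℕ) < m := by omega
  funext i
  simp only [Matrix.mulVec_single_one, Matrix.col_apply, mul_one]
  have hkc : k = Fin.castSucc (⟨(k : ℕ), hkm⟩ : Fin m) := Fin.ext rfl
  cases i using Fin.lastCases with
  | last =>
    rw [hkc, hc]
    simp only [jordanBlock, Matrix.of_apply, Fin.val_last, Fin.coe_castSucc]
    rw [if_neg (by omega), if_neg (by omega)]
  | cast i' =>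
    have hB : A (Fin.castSucc i') k = B i' ⟨(k : ℕ), hkm⟩ := rfl
    rw [hB, hBJ]
    simp only [jordanBlock, Matrix.of_apply, Fin.coe_castSucc]
end

section
/- Let X be a complex Banach space of dimension at least three and let A, B ∈ B(X) satisfy: for every rank-one nilpotent N ∈ B(X), A∘N is a nonzero idempotent if and only if B∘N is a nonzero idempotent. Then for any y ∈ X such that either the vectors y, Ay, A²y are linearly independent, or y, Ay are linearly independent and A²y = 0, there exist scalars α, γ ∈ ℂ such that By = αy + Ay + γA²y, and B²y lies in the linear span of {y, A²y}. -/
open ContinuousLinearMap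

/-- Dual family: prescribe values of a continuous functional on a finite
linearly independent family. -/
lemma exists_dual_clm {X : Type*} [NormedAddCommGroup X] [NormedSpace ℂ X]
    {n : ℕ} {v : Fin n → X} (hv : LinearIndependent ℂ v) (c : Fin n → ℂ) :
    ∃ f : X →L[ℂ] ℂ, ∀ i, f (v i) = c i := by
  set L : (Fin n → ℂ) →ₗ[ℂ] X :=
    (Finsupp.linearCombination ℂ v).comp
      (Finsupp.linearEquivFunOnFinite ℂ ℂ (Fin n)).symm.toLinearMap with hL
  have hLinj : Function.Injective L :=
    (show Function.Injective (Finsupp.linearCombination ℂ v) from hv).comp (LinearEquiv.injective _)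
  have hsurj := (SeparatingDual.dualMap_surjective_iff (R := ℂ) (V := X) (f := L)).2 hLinj
  obtain ⟨g, hg⟩ := hsurj (∑ i, c i • LinearMap.proj i)
  refine ⟨g, fun i => ?_⟩
  have h1 : L (Pi.single i 1) = v i := by
    simp [hL, Finsupp.linearEquivFunOnFinite]
  have h2 := LinearMap.congr_fun hg (Pi.single i 1)
  simp only [LinearMap.dualMap_apply, Function.comp_apply, ContinuousLinearMap.coe_coe] at h2
  rw [h1] at h2
  rw [h2]
  simp [LinearMap.proj, Pi.single_apply, Finset.sum_ite_eq']

lemma smul_cancel_vec {X : Type*} [AddCommGroup X] [Module ℂ X]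
    {y : X} (hy : y ≠ 0) {a b : ℂ} (h : a • y = b • y) : a = b := by
  have h' : (a - b) • y = 0 := by rw [sub_smul, h, sub_self]
  rcases smul_eq_zero.1 h' with h'' | h''
  · exact sub_eq_zero.1 h''
  · exact absurd h'' hy

/-- The key functional transfer lemma. -/
lemma key_transfer {X : Type*} [NormedAddCommGroup X] [NormedSpace ℂ X]
    (A B : X →L[ℂ] X)
    (h : ∀ N : X →L[ℂ] X, (LinearMap.rank (N : X →ₗ[ℂ] X) = 1 ∧ N * N = 0) →
      ((IsIdempotentElem ((2⁻¹ : ℂ) • (A * N + N * A)) ∧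
          (2⁻¹ : ℂ) • (A * N + N * A) ≠ 0) ↔
        (IsIdempotentElem ((2⁻¹ : ℂ) • (B * N + N * B)) ∧
          (2⁻¹ : ℂ) • (B * N + N * B) ≠ 0)))
    {y : X} (hy : y ≠ 0) (f : X →L[ℂ] ℂ)
    (hf0 : f y = 0) (hf1 : f (A y) = 2) (hf2 : f (A (A y)) = 0) :
    f (B y) = 2 ∧ f (B (B y)) = 0 := by
  set N : X →L[ℂ] X := f.smulRight y with hNdef
  obtain ⟨z₀, hz₀⟩ : ∃ z, f z = 1 := by
    refine ⟨(f (A y))⁻¹ • A y, ?_⟩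
    rw [map_smul, hf1]
    norm_num
  have appM : ∀ (C : X →L[ℂ] X) (z : X), ((2⁻¹ : ℂ) • (C * N + N * C)) z
      = (2⁻¹ * f z) • C y + (2⁻¹ * f (C z)) • y := by
    intro C z
    simp only [ContinuousLinearMap.smul_apply, ContinuousLinearMap.add_apply,
      ContinuousLinearMap.mul_apply, hNdef, ContinuousLinearMap.smulRight_apply,
      map_smul]
    module
  have hrank : LinearMap.rank (N : X →ₗ[ℂ] X) = 1 := by
    have hrange : LinearMap.range (N : X →ₗ[ℂ] X) = Submodule.span ℂ {y} := by
      apply le_antisymm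
      · rintro _ ⟨z, rfl⟩
        exact Submodule.smul_mem _ _ (Submodule.mem_span_singleton_self y)
      · rw [Submodule.span_singleton_le_iff_mem]
        exact ⟨z₀, by simp [hNdef, hz₀]⟩
    rw [LinearMap.rank, hrange, ← Module.finrank_eq_rank, finrank_span_singleton hy]
    norm_num
  have hN2 : N * N = 0 := by
    ext z
    simp [hNdef, hf0, smul_smul]
  have hAidem : IsIdempotentElem ((2⁻¹ : ℂ) • (A * N + N * A)) := by
    rw [IsIdempotentElem]
    ext z
    simp only [ContinuousLinearMap.mul_apply]
    simp only [appM]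
    simp only [map_add, map_smul, hf0, hf1, hf2, smul_eq_mul]
    match_scalars <;> ring
  have hAy : ((2⁻¹ : ℂ) • (A * N + N * A)) y = y := by
    rw [appM A, hf0, hf1]
    match_scalars <;> ring
  have hAne : (2⁻¹ : ℂ) • (A * N + N * A) ≠ 0 := by
    intro h0
    rw [h0] at hAy
    exact hy (by simpa using hAy.symm)
  obtain ⟨hBidem, hBne⟩ := (h N ⟨hrank, hN2⟩).1 ⟨hAidem, hAne⟩
  set c := f (B y) with hc
  set d := f (B (B y)) with hd
  have E : ∀ z : X, (2⁻¹ * (2⁻¹ * f z * c)) • B y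
      + (2⁻¹ * (2⁻¹ * f z * d + 2⁻¹ * f (B z) * c)) • y
      = (2⁻¹ * f z) • B y + (2⁻¹ * f (B z)) • y := by
    intro z
    have hzz := ContinuousLinearMap.ext_iff.mp hBidem z
    simp only [ContinuousLinearMap.mul_apply] at hzz
    simp only [appM] at hzz
    simp only [map_add, map_smul, hf0, smul_eq_mul] at hzz
    rw [← hc, ← hd] at hzz
    linear_combination (norm := module) hzz
  have hc2 : c = 2 := by
    have aY : (2⁻¹ * (2⁻¹ * c * c)) • y = (2⁻¹ * c) • y := by
      have h0 := E y
      rw [hf0, ← hc] at h0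
      linear_combination (norm := module) h0
    have a := smul_cancel_vec hy aY
    have hq : c * (c - 2) = 0 := by linear_combination 4 * a
    rcases mul_eq_zero.1 hq with h1 | h1
    · -- c = 0 leads to M_B = 0, contradiction
      exfalso
      have hker : ∀ z : X, f z = 0 → f (B z) = 0 := by
        intro z hz
        have h0 := E z
        rw [hz, h1] at h0
        have aY2 : (2⁻¹ * f (B z)) • y = (0 : ℂ) • y := by
          linear_combination (norm := module) (-1 : ℂ) • h0
        have := smul_cancel_vec hy aY2
        linear_combination 2 * this
      have hBy : B y = (2⁻¹ * d - f (B z₀)) • y := by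
        have h0 := E z₀
        rw [hz₀, h1] at h0
        linear_combination (norm := module) (-2 : ℂ) • h0
      have hd0 : d = 0 := by
        have h2 : d = (2⁻¹ * d - f (B z₀)) * c := by
          conv_lhs => rw [hd]
          rw [hBy, map_smul, map_smul, smul_eq_mul, ← hc]
        rw [h1, mul_zero] at h2
        exact h2
      apply hBne
      ext z
      rw [appM B, ContinuousLinearMap.zero_apply]
      have h5 := hker (z - f z • z₀) (by rw [map_sub, map_smul, hz₀]; simp)
      rw [map_sub, map_sub, map_smul, map_smul] at h5
      have hw : f (B z) = f z * f (B z₀) := by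
        rw [smul_eq_mul] at h5
        linear_combination h5
      rw [hBy, hd0, hw]
      module
    · linear_combination h1
  refine ⟨by rw [hc, ← hc2], ?_⟩
  have h0 := E z₀
  rw [hz₀, hc2] at h0
  have aY2 : (4⁻¹ * d) • y = (0 : ℂ) • y := by
    linear_combination (norm := module) h0
  have := smul_cancel_vec hy aY2
  rw [hd]
  linear_combination 4 * this

theorem stmt_17 {X : Type*} [NormedAddCommGroup X] [NormedSpace ℂ X] [CompleteSpace X]
    (hdim : 3 ≤ Module.rank ℂ X)
    (A B : X →L[ℂ] X)
    (h : ∀ N : X →L[ℂ] X, (LinearMap.rank (N : X →ₗ[ℂ] X) = 1 ∧ N * N = 0) →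
      ((IsIdempotentElem ((2⁻¹ : ℂ) • (A * N + N * A)) ∧
          (2⁻¹ : ℂ) • (A * N + N * A) ≠ 0) ↔
        (IsIdempotentElem ((2⁻¹ : ℂ) • (B * N + N * B)) ∧
          (2⁻¹ : ℂ) • (B * N + N * B) ≠ 0))) :
    ∀ y : X,
      (LinearIndependent ℂ ![y, A y, A (A y)] ∨
        (LinearIndependent ℂ ![y, A y] ∧ A (A y) = 0)) →
      ∃ α γ : ℂ, B y = α • y + A y + γ • A (A y) ∧
        B (B y) ∈ Submodule.span ℂ ({y, A (A y)} : Set X) := by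
  intro y hcase
  rcases hcase with hli3 | ⟨hli2, hA2⟩
  · -- case 1 : y, Ay, A²y independent
    have hy : y ≠ 0 := by have := hli3.ne_zero 0; simpa using this
    obtain ⟨f₁, hf₁⟩ := exists_dual_clm hli3 ![0, 2, 0]
    have hv0 : f₁ y = 0 := by simpa using hf₁ 0
    have hv1 : f₁ (A y) = 2 := by simpa using hf₁ 1
    have hv2 : f₁ (A (A y)) = 0 := by simpa using hf₁ 2
    have k₁ := key_transfer A B h hy f₁ hv0 hv1 hv2
    have hBy_mem : B y ∈ Submodule.span ℂ (Set.range ![y, A y, A (A y)]) := by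
      by_contra hmem
      have hli4 : LinearIndependent ℂ ![B y, y, A y, A (A y)] :=
        linearIndependent_fin_cons.2 ⟨hli3, hmem⟩
      obtain ⟨f, hf⟩ := exists_dual_clm hli4 ![0, 0, 2, 0]
      have k := key_transfer A B h hy f (by simpa using hf 1) (by simpa using hf 2)
        (by simpa using hf 3)
      have : f (B y) = 0 := by simpa using hf 0
      rw [k.1] at this
      norm_num at this
    have hB2_mem : B (B y) ∈ Submodule.span ℂ (Set.range ![y, A y, A (A y)]) := by
      by_contra hmem
      have hli4 : LinearIndependent ℂ ![B (B y), y, A y, A (A y)] :=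
        linearIndependent_fin_cons.2 ⟨hli3, hmem⟩
      obtain ⟨f, hf⟩ := exists_dual_clm hli4 ![1, 0, 2, 0]
      have k := key_transfer A B h hy f (by simpa using hf 1) (by simpa using hf 2)
        (by simpa using hf 3)
      have : f (B (B y)) = 1 := by simpa using hf 0
      rw [k.2] at this
      norm_num at this
    obtain ⟨t, ht⟩ := (Submodule.mem_span_range_iff_exists_fun ℂ).1 hBy_mem
    obtain ⟨s, hs⟩ := (Submodule.mem_span_range_iff_exists_fun ℂ).1 hB2_mem
    simp only [Fin.sum_univ_three, Matrix.cons_val_zero, Matrix.cons_val_one,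
      Matrix.head_cons, Matrix.cons_val_two, Matrix.tail_cons] at ht hs
    have ht1 : t 1 = 1 := by
      have hk := k₁.1
      rw [← ht] at hk
      simp only [map_add, map_smul, smul_eq_mul, hv0, hv1, hv2] at hk
      linear_combination 2⁻¹ * hk
    have hs1 : s 1 = 0 := by
      have hk := k₁.2
      rw [← hs] at hk
      simp only [map_add, map_smul, smul_eq_mul, hv0, hv1, hv2] at hk
      linear_combination 2⁻¹ * hk
    refine ⟨t 0, t 2, ?_, ?_⟩
    · rw [← ht, ht1, one_smul]
    · have hB2 : B (B y) = s 0 • y + s 2 • A (A y) := by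
        rw [← hs, hs1, zero_smul, add_zero]
      rw [hB2]
      exact Submodule.add_mem _
        (Submodule.smul_mem _ _ (Submodule.subset_span (by simp)))
        (Submodule.smul_mem _ _ (Submodule.subset_span (by simp)))
  · -- case 2 : y, Ay independent and A²y = 0
    have hy : y ≠ 0 := by have := hli2.ne_zero 0; simpa using this
    obtain ⟨f₁, hf₁⟩ := exists_dual_clm hli2 ![0, 2]
    have hv0 : f₁ y = 0 := by simpa using hf₁ 0
    have hv1 : f₁ (A y) = 2 := by simpa using hf₁ 1
    have hv2 : f₁ (A (A y)) = 0 := by rw [hA2, map_zero]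
    have k₁ := key_transfer A B h hy f₁ hv0 hv1 hv2
    have hBy_mem : B y ∈ Submodule.span ℂ (Set.range ![y, A y]) := by
      by_contra hmem
      have hli3 : LinearIndependent ℂ ![B y, y, A y] :=
        linearIndependent_fin_cons.2 ⟨hli2, hmem⟩
      obtain ⟨f, hf⟩ := exists_dual_clm hli3 ![0, 0, 2]
      have k := key_transfer A B h hy f (by simpa using hf 1) (by simpa using hf 2)
        (by rw [hA2, map_zero])
      have : f (B y) = 0 := by simpa using hf 0
      rw [k.1] at this
      norm_num at this
    have hB2_mem : B (B y) ∈ Submodule.span ℂ (Set.range ![y, A y]) := by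
      by_contra hmem
      have hli3 : LinearIndependent ℂ ![B (B y), y, A y] :=
        linearIndependent_fin_cons.2 ⟨hli2, hmem⟩
      obtain ⟨f, hf⟩ := exists_dual_clm hli3 ![1, 0, 2]
      have k := key_transfer A B h hy f (by simpa using hf 1) (by simpa using hf 2)
        (by rw [hA2, map_zero])
      have : f (B (B y)) = 1 := by simpa using hf 0
      rw [k.2] at this
      norm_num at this
    obtain ⟨t, ht⟩ := (Submodule.mem_span_range_iff_exists_fun ℂ).1 hBy_mem
    obtain ⟨s, hs⟩ := (Submodule.mem_span_range_iff_exists_fun ℂ).1 hB2_mem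
    simp only [Fin.sum_univ_two, Matrix.cons_val_zero, Matrix.cons_val_one,
      Matrix.head_cons] at ht hs
    have ht1 : t 1 = 1 := by
      have hk := k₁.1
      rw [← ht] at hk
      simp only [map_add, map_smul, smul_eq_mul, hv0, hv1] at hk
      linear_combination 2⁻¹ * hk
    have hs1 : s 1 = 0 := by
      have hk := k₁.2
      rw [← hs] at hk
      simp only [map_add, map_smul, smul_eq_mul, hv0, hv1] at hk
      linear_combination 2⁻¹ * hk
    refine ⟨t 0, 0, ?_, ?_⟩
    · rw [← ht, ht1, one_smul, hA2, smul_zero, add_zero]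
    · have hB2 : B (B y) = s 0 • y := by
        rw [← hs, hs1, zero_smul, add_zero]
      rw [hB2]
      exact Submodule.smul_mem _ _ (Submodule.subset_span (by simp))
end

section
/- Let X be a complex Banach space of dimension at least three and let A, B ∈ B(X) satisfy: for every rank-one nilpotent N ∈ B(X), A∘N is a nonzero idempotent if and only if B∘N is a nonzero idempotent. Then for any x ∈ X such that either the vectors x, Ax, A²x, A³x, A⁴x are linearly independent, or the vectors x, Ax, A²x, A³x are linearly independent and A⁴x = 0, one has Bx = Ax, BAx = A²x, and BA²x = A³x. -/
open Submodule ContinuousLinearMap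

section Aux
variable {X : Type*} [NormedAddCommGroup X] [NormedSpace ℂ X]

private lemma hb_exists' {n : ℕ} (v : Fin n → X) (hv : LinearIndependent ℂ v) (c : Fin n → ℂ) :
    ∃ f : X →L[ℂ] ℂ, ∀ i, f (v i) = c i := by
  have : FiniteDimensional ℂ (Submodule.span ℂ (Set.range v)) :=
    FiniteDimensional.span_of_finite ℂ (Set.finite_range v)
  let b : Module.Basis (Fin n) ℂ (Submodule.span ℂ (Set.range v)) := Module.Basis.span hv
  let g : (Submodule.span ℂ (Set.range v)) →ₗ[ℂ] ℂ := b.constr ℂ c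
  let gc : (Submodule.span ℂ (Set.range v)) →L[ℂ] ℂ := LinearMap.toContinuousLinearMap g
  obtain ⟨f, hf, -⟩ := exists_extension_norm_eq (Submodule.span ℂ (Set.range v)) gc
  refine ⟨f, fun i => ?_⟩
  have hmem : v i ∈ Submodule.span ℂ (Set.range v) := subset_span (Set.mem_range_self i)
  have h1 : f (v i) = gc ⟨v i, hmem⟩ := hf ⟨v i, hmem⟩
  have h2 : (⟨v i, hmem⟩ : Submodule.span ℂ (Set.range v)) = b i := by
    apply Subtype.ext
    exact congrArg Subtype.val (Module.Basis.span_apply hv i).symm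
  rw [h1, h2]
  show g (b i) = c i
  simp [g, Module.Basis.constr_basis]

private lemma mem_span_aux' {n : ℕ} (v : Fin n → X) (hv : LinearIndependent ℂ v)
    (w : X) (r : ℂ) (c : Fin n → ℂ)
    (hw : ∀ f : X →L[ℂ] ℂ, (∀ i, f (v i) = c i) → f w = r) :
    w ∈ Submodule.span ℂ (Set.range v) := by
  by_contra hmem
  have hsnoc : LinearIndependent ℂ (Fin.snoc v w : Fin (n+1) → X) :=
    linearIndependent_fin_snoc.mpr ⟨hv, hmem⟩
  have key : ∀ t : ℂ, ∃ f : X →L[ℂ] ℂ, (∀ i, f (v i) = c i) ∧ f w = t := by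
    intro t
    obtain ⟨f, hf⟩ := hb_exists' _ hsnoc (Fin.snoc c t)
    refine ⟨f, fun i => ?_, ?_⟩
    · have := hf (Fin.castSucc i)
      simpa using this
    · have := hf (Fin.last n)
      simpa using this
  obtain ⟨f0, hf0, hf0w⟩ := key 0
  obtain ⟨f1, hf1, hf1w⟩ := key 1
  have e0 : (0 : ℂ) = r := by rw [← hf0w]; exact hw f0 hf0
  have e1 : (1 : ℂ) = r := by rw [← hf1w]; exact hw f1 hf1
  exact one_ne_zero (e1.trans e0.symm)

private lemma key_lemma' (A B : X →L[ℂ] X)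
    (h : ∀ N : X →L[ℂ] X, (LinearMap.rank (N : X →ₗ[ℂ] X) = 1 ∧ N * N = 0) →
      ((IsIdempotentElem ((2⁻¹ : ℂ) • (A * N + N * A)) ∧
          (2⁻¹ : ℂ) • (A * N + N * A) ≠ 0) ↔
        (IsIdempotentElem ((2⁻¹ : ℂ) • (B * N + N * B)) ∧
          (2⁻¹ : ℂ) • (B * N + N * B) ≠ 0)))
    (u : X) (f : X →L[ℂ] ℂ) (h0 : f u = 0) (h1 : f (A u) = 2) (h2 : f (A (A u)) = 0) :
    f (B u) = 2 ∧ f (B (B u)) = 0 := by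
  have hu : u ≠ 0 := by
    intro hu0
    rw [hu0] at h1
    simp at h1
  set N : X →L[ℂ] X := f.smulRight u with hN
  have hNapp : ∀ z, N z = f z • u := fun z => rfl
  have hrange : LinearMap.range (N : X →ₗ[ℂ] X) = ℂ ∙ u := by
    apply le_antisymm
    · rintro y ⟨z, rfl⟩
      exact Submodule.mem_span_singleton.mpr ⟨f z, rfl⟩
    · rw [Submodule.span_singleton_le_iff_mem]
      refine ⟨(2⁻¹ : ℂ) • A u, ?_⟩
      show f ((2⁻¹ : ℂ) • A u) • u = u
      rw [map_smul, h1]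
      norm_num
  have hrank : LinearMap.rank (N : X →ₗ[ℂ] X) = 1 := by
    rw [LinearMap.rank, hrange]
    rw [← Module.finrank_eq_rank, finrank_span_singleton hu]
    norm_num
  have hsq : N * N = 0 := by
    ext z
    show N (N z) = 0
    rw [hNapp, hNapp, map_smul, h0]
    simp
  have ev : ∀ (C : X →L[ℂ] X) (z : X),
      ((2⁻¹ : ℂ) • (C * N + N * C)) z = (2⁻¹ : ℂ) • (f z • C u + f (C z) • u) := by
    intro C z
    show (2⁻¹ : ℂ) • (C (N z) + N (C z)) = _
    rw [hNapp, hNapp, map_smul]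
  have hAidem : IsIdempotentElem ((2⁻¹ : ℂ) • (A * N + N * A)) := by
    show _ * _ = _
    ext z
    rw [ContinuousLinearMap.mul_apply, ev, ev]
    simp only [map_smul, map_add, smul_eq_mul, h0, h1, h2, mul_zero, mul_one, add_zero,
      zero_add]
    match_scalars <;> ring
  have hAne : ((2⁻¹ : ℂ) • (A * N + N * A)) ≠ 0 := by
    intro hc
    have hAu : A u ≠ 0 := by
      intro hA0; rw [hA0] at h1; simp at h1
    have h4 := congrArg (fun T : X →L[ℂ] X => T ((2⁻¹ : ℂ) • A u)) hc
    simp only [ev, zero_apply, map_smul, smul_eq_mul, h1, h2] at h4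
    have h5 : (2⁻¹ : ℂ) • A u = 0 := by
      linear_combination (norm := module) h4
    rcases smul_eq_zero.mp h5 with h6 | h6
    · norm_num at h6
    · exact hAu h6
  obtain ⟨hBidem, hBne⟩ := (h N ⟨hrank, hsq⟩).mp ⟨hAidem, hAne⟩
  have hE : ∀ z : X, (2⁻¹ : ℂ) • ((2⁻¹ * (f z * f (B u))) • B u
      + (2⁻¹ * (f z * f (B (B u)) + f (B z) * f (B u))) • u)
      = (2⁻¹ : ℂ) • (f z • B u + f (B z) • u) := by
    intro z
    have hz := congrArg (fun T : X →L[ℂ] X => T z) hBidem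
    simp only [ContinuousLinearMap.mul_apply] at hz
    rw [ev, ev] at hz
    simp only [map_smul, map_add, smul_eq_mul, h0, mul_zero, add_zero] at hz
    linear_combination (norm := module) hz
  have E1 := hE ((2⁻¹ : ℂ) • A u)
  rw [show f ((2⁻¹ : ℂ) • A u) = 1 by rw [map_smul, h1]; norm_num] at E1
  have hβsq : f (B u) * f (B u) = 2 * f (B u) := by
    have hf1 := congrArg f E1
    simp only [map_smul, map_add, smul_eq_mul, h0, mul_zero, add_zero, one_mul, mul_one] at hf1
    linear_combination (4 : ℂ) * hf1
  have hcases : f (B u) = 0 ∨ f (B u) = 2 := by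
    rcases mul_eq_zero.mp (show f (B u) * (f (B u) - 2) = 0 by linear_combination hβsq)
      with h' | h'
    · exact Or.inl h'
    · exact Or.inr (sub_eq_zero.mp h')
  rcases hcases with hβ0 | hβ2
  · exfalso
    rw [hβ0] at E1
    have hBu : B u = (2⁻¹ * f (B (B u)) - f (B ((2⁻¹ : ℂ) • A u))) • u := by
      linear_combination (norm := module) (-2 : ℂ) • E1
    obtain ⟨c, hc⟩ : ∃ c : ℂ, B u = c • u := ⟨_, hBu⟩
    have hδ0 : f (B (B u)) = 0 := by
      rw [hc, map_smul, map_smul]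
      simp [hβ0]
    apply hBne
    ext z
    simp only [ContinuousLinearMap.zero_apply]
    rw [ev]
    have hz := hE z
    rw [hβ0, hδ0] at hz
    linear_combination (norm := module) (-1 : ℂ) • hz
  · refine ⟨hβ2, ?_⟩
    rw [hβ2] at E1
    have h7 : ((4⁻¹ : ℂ) * f (B (B u))) • u = 0 := by
      linear_combination (norm := module) E1
    rcases smul_eq_zero.mp h7 with h8 | h8
    · have h9 : (4⁻¹ : ℂ) ≠ 0 := by norm_num
      exact (mul_eq_zero.mp h8).resolve_left h9
    · exact absurd h8 hu

end Aux



theorem stmt_18 {X : Type*} [NormedAddCommGroup X] [NormedSpace ℂ X] [CompleteSpace X]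
    (hdim : 3 ≤ Module.rank ℂ X)
    (A B : X →L[ℂ] X)
    (h : ∀ N : X →L[ℂ] X, (LinearMap.rank (N : X →ₗ[ℂ] X) = 1 ∧ N * N = 0) →
      ((IsIdempotentElem ((2⁻¹ : ℂ) • (A * N + N * A)) ∧
          (2⁻¹ : ℂ) • (A * N + N * A) ≠ 0) ↔
        (IsIdempotentElem ((2⁻¹ : ℂ) • (B * N + N * B)) ∧
          (2⁻¹ : ℂ) • (B * N + N * B) ≠ 0))) :
    ∀ x : X,
      (LinearIndependent ℂ ![x, A x, A (A x), A (A (A x)), A (A (A (A x)))] ∨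
        (LinearIndependent ℂ ![x, A x, A (A x), A (A (A x))] ∧ A (A (A (A x))) = 0)) →
      B x = A x ∧ B (A x) = A (A x) ∧ B (A (A x)) = A (A (A x)) := by
  intro x hx
  have K := key_lemma' A B h
  rcases hx with hli | ⟨hli, h4⟩
  · -- Case 1: x, Ax, A²x, A³x, A⁴x linearly independent
    set v : Fin 5 → X := ![x, A x, A (A x), A (A (A x)), A (A (A (A x)))] with hv
    -- span decompositions
    obtain ⟨a, ha⟩ := (mem_span_range_iff_exists_fun ℂ).mp
      (mem_span_aux' v hli (B x) 2 ![0,2,0,0,0] (fun f hf => (K x f (hf 0) (hf 1) (hf 2)).1))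
    obtain ⟨b, hbd⟩ := (mem_span_range_iff_exists_fun ℂ).mp
      (mem_span_aux' v hli (B (A x)) 2 ![0,0,2,0,0]
        (fun f hf => (K (A x) f (hf 1) (hf 2) (hf 3)).1))
    obtain ⟨g, hgd⟩ := (mem_span_range_iff_exists_fun ℂ).mp
      (mem_span_aux' v hli (B (A (A x))) 2 ![0,0,0,2,0]
        (fun f hf => (K (A (A x)) f (hf 2) (hf 3) (hf 4)).1))
    -- evaluation formulas
    have evA : ∀ (c0 c1 c2 c3 c4 : ℂ) (f : X →L[ℂ] ℂ), f x = c0 → f (A x) = c1 →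
        f (A (A x)) = c2 → f (A (A (A x))) = c3 → f (A (A (A (A x)))) = c4 →
        f (B x) = a 0 * c0 + a 1 * c1 + a 2 * c2 + a 3 * c3 + a 4 * c4 := by
      intro c0 c1 c2 c3 c4 f h0 h1 h2 h3 hc4
      rw [← ha, map_sum, Fin.sum_univ_five]
      simp only [map_smul, smul_eq_mul]
      rw [show f (v 0) = c0 from h0, show f (v 1) = c1 from h1, show f (v 2) = c2 from h2,
        show f (v 3) = c3 from h3, show f (v 4) = c4 from hc4]
    have evB : ∀ (c0 c1 c2 c3 c4 : ℂ) (f : X →L[ℂ] ℂ), f x = c0 → f (A x) = c1 →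
        f (A (A x)) = c2 → f (A (A (A x))) = c3 → f (A (A (A (A x)))) = c4 →
        f (B (A x)) = b 0 * c0 + b 1 * c1 + b 2 * c2 + b 3 * c3 + b 4 * c4 := by
      intro c0 c1 c2 c3 c4 f h0 h1 h2 h3 hc4
      rw [← hbd, map_sum, Fin.sum_univ_five]
      simp only [map_smul, smul_eq_mul]
      rw [show f (v 0) = c0 from h0, show f (v 1) = c1 from h1, show f (v 2) = c2 from h2,
        show f (v 3) = c3 from h3, show f (v 4) = c4 from hc4]
    have evG : ∀ (c0 c1 c2 c3 c4 : ℂ) (f : X →L[ℂ] ℂ), f x = c0 → f (A x) = c1 →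
        f (A (A x)) = c2 → f (A (A (A x))) = c3 → f (A (A (A (A x)))) = c4 →
        f (B (A (A x))) = g 0 * c0 + g 1 * c1 + g 2 * c2 + g 3 * c3 + g 4 * c4 := by
      intro c0 c1 c2 c3 c4 f h0 h1 h2 h3 hc4
      rw [← hgd, map_sum, Fin.sum_univ_five]
      simp only [map_smul, smul_eq_mul]
      rw [show f (v 0) = c0 from h0, show f (v 1) = c1 from h1, show f (v 2) = c2 from h2,
        show f (v 3) = c3 from h3, show f (v 4) = c4 from hc4]
    -- constraint instances
    have inst_a : ∀ c0 c1 c2 c3 c4 : ℂ, c0 = 0 → c1 = 2 → c2 = 0 →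
        a 0 * c0 + a 1 * c1 + a 2 * c2 + a 3 * c3 + a 4 * c4 = 2 := by
      intro c0 c1 c2 c3 c4 h0 h1 h2
      obtain ⟨f, hf⟩ := hb_exists' v hli ![c0, c1, c2, c3, c4]
      have hK := (K x f ((hf 0).trans h0) ((hf 1).trans h1) ((hf 2).trans h2)).1
      rw [evA c0 c1 c2 c3 c4 f (hf 0) (hf 1) (hf 2) (hf 3) (hf 4)] at hK
      exact hK
    have inst_b : ∀ c0 c1 c2 c3 c4 : ℂ, c1 = 0 → c2 = 2 → c3 = 0 →
        b 0 * c0 + b 1 * c1 + b 2 * c2 + b 3 * c3 + b 4 * c4 = 2 := by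
      intro c0 c1 c2 c3 c4 h1 h2 h3
      obtain ⟨f, hf⟩ := hb_exists' v hli ![c0, c1, c2, c3, c4]
      have hK := (K (A x) f ((hf 1).trans h1) ((hf 2).trans h2) ((hf 3).trans h3)).1
      rw [evB c0 c1 c2 c3 c4 f (hf 0) (hf 1) (hf 2) (hf 3) (hf 4)] at hK
      exact hK
    have inst_g : ∀ c0 c1 c2 c3 c4 : ℂ, c2 = 0 → c3 = 2 → c4 = 0 →
        g 0 * c0 + g 1 * c1 + g 2 * c2 + g 3 * c3 + g 4 * c4 = 2 := by
      intro c0 c1 c2 c3 c4 h2 h3 hc4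
      obtain ⟨f, hf⟩ := hb_exists' v hli ![c0, c1, c2, c3, c4]
      have hK := (K (A (A x)) f ((hf 2).trans h2) ((hf 3).trans h3) ((hf 4).trans hc4)).1
      rw [evG c0 c1 c2 c3 c4 f (hf 0) (hf 1) (hf 2) (hf 3) (hf 4)] at hK
      exact hK
    have inst_ab : ∀ c0 c1 c2 c3 c4 : ℂ, c0 + c1 = 0 → c1 + c2 = 2 → c2 + c3 = 0 →
        (b 0 * c0 + b 1 * c1 + b 2 * c2 + b 3 * c3 + b 4 * c4)
          + (a 0 * c0 + a 1 * c1 + a 2 * c2 + a 3 * c3 + a 4 * c4) = 2 := by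
      intro c0 c1 c2 c3 c4 h01 h12 h23
      obtain ⟨f, hf⟩ := hb_exists' v hli ![c0, c1, c2, c3, c4]
      have hu0 : f (A x + x) = 0 := by
        rw [map_add, show f (A x) = c1 from hf 1, show f x = c0 from hf 0]
        linear_combination h01
      have hu1 : f (A (A x + x)) = 2 := by
        rw [map_add, map_add, show f (A (A x)) = c2 from hf 2, show f (A x) = c1 from hf 1]
        linear_combination h12
      have hu2 : f (A (A (A x + x))) = 0 := by
        rw [map_add, map_add, map_add,
          show f (A (A (A x))) = c3 from hf 3, show f (A (A x)) = c2 from hf 2]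
        linear_combination h23
      have hK := (K (A x + x) f hu0 hu1 hu2).1
      rw [map_add, map_add, evB c0 c1 c2 c3 c4 f (hf 0) (hf 1) (hf 2) (hf 3) (hf 4),
        evA c0 c1 c2 c3 c4 f (hf 0) (hf 1) (hf 2) (hf 3) (hf 4)] at hK
      exact hK
    have inst_bg : ∀ c0 c1 c2 c3 c4 : ℂ, c1 + c2 = 0 → c2 + c3 = 2 → c3 + c4 = 0 →
        (g 0 * c0 + g 1 * c1 + g 2 * c2 + g 3 * c3 + g 4 * c4)
          + (b 0 * c0 + b 1 * c1 + b 2 * c2 + b 3 * c3 + b 4 * c4) = 2 := by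
      intro c0 c1 c2 c3 c4 h12 h23 h34
      obtain ⟨f, hf⟩ := hb_exists' v hli ![c0, c1, c2, c3, c4]
      have hu0 : f (A (A x) + A x) = 0 := by
        rw [map_add, show f (A (A x)) = c2 from hf 2, show f (A x) = c1 from hf 1]
        linear_combination h12
      have hu1 : f (A (A (A x) + A x)) = 2 := by
        rw [map_add, map_add,
          show f (A (A (A x))) = c3 from hf 3, show f (A (A x)) = c2 from hf 2]
        linear_combination h23
      have hu2 : f (A (A (A (A x) + A x))) = 0 := by
        rw [map_add, map_add, map_add,
          show f (A (A (A (A x)))) = c4 from hf 4, show f (A (A (A x))) = c3 from hf 3]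
        linear_combination h34
      have hK := (K (A (A x) + A x) f hu0 hu1 hu2).1
      rw [map_add, map_add, evG c0 c1 c2 c3 c4 f (hf 0) (hf 1) (hf 2) (hf 3) (hf 4),
        evB c0 c1 c2 c3 c4 f (hf 0) (hf 1) (hf 2) (hf 3) (hf 4)] at hK
      exact hK
    -- first round of coefficient facts
    have HA1 := inst_a 0 2 0 0 0 rfl rfl rfl
    have HA2 := inst_a 0 2 0 1 0 rfl rfl rfl
    have HA3 := inst_a 0 2 0 0 1 rfl rfl rfl
    have HB1 := inst_b 0 0 2 0 0 rfl rfl rfl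
    have HB2 := inst_b 1 0 2 0 0 rfl rfl rfl
    have HB3 := inst_b 0 0 2 0 1 rfl rfl rfl
    have HC1 := inst_g 0 0 0 2 0 rfl rfl rfl
    have HC2 := inst_g 1 0 0 2 0 rfl rfl rfl
    have HC3 := inst_g 0 1 0 2 0 rfl rfl rfl
    have HD1 := inst_ab 0 0 2 (-2) 0 (by norm_num) (by norm_num) (by norm_num)
    have HD2 := inst_ab (-1) 1 1 (-1) 0 (by norm_num) (by norm_num) (by norm_num)
    have HE1 := inst_bg 0 0 0 2 (-2) (by norm_num) (by norm_num) (by norm_num)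
    have HE2 := inst_bg 0 (-1) 1 1 (-1) (by norm_num) (by norm_num) (by norm_num)
    have ha1 : a 1 = 1 := by linear_combination (2⁻¹ : ℂ) * HA1
    have ha3 : a 3 = 0 := by linear_combination HA2 - HA1
    have ha4 : a 4 = 0 := by linear_combination HA3 - HA1
    have hb2 : b 2 = 1 := by linear_combination (2⁻¹ : ℂ) * HB1
    have hb0 : b 0 = 0 := by linear_combination HB2 - HB1
    have hb4 : b 4 = 0 := by linear_combination HB3 - HB1
    have hg3 : g 3 = 1 := by linear_combination (2⁻¹ : ℂ) * HC1
    have hg0 : g 0 = 0 := by linear_combination HC2 - HC1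
    have hg1 : g 1 = 0 := by linear_combination HC3 - HC1
    have hb3 : b 3 = a 2 := by linear_combination (-2⁻¹ : ℂ) * HD1 - ha3 + hb2
    have hb1 : b 1 = a 0 := by linear_combination HD2 - ha1 + hb3 + ha3 + hb0 - hb2
    have hg4 : g 4 = b 3 := by linear_combination (-2⁻¹ : ℂ) * HE1 - hb4 + hg3
    have hg2 : g 2 = b 1 := by linear_combination HE2 - hb2 + hb4 + hg1 - hg3 + hg4
    -- second-order condition
    have hBB : ∀ f : X →L[ℂ] ℂ, f (B (B x)) =
        a 0 * f (B x) + a 1 * f (B (A x)) + a 2 * f (B (A (A x)))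
        + a 3 * f (B (A (A (A x)))) + a 4 * f (B (A (A (A (A x))))) := by
      intro f
      conv_lhs => rw [← ha]
      rw [map_sum, map_sum, Fin.sum_univ_five]
      simp only [map_smul, smul_eq_mul]
      rfl
    have inst_a2 : ∀ c0 c1 c2 c3 c4 : ℂ, c0 = 0 → c1 = 2 → c2 = 0 →
        a 0 * (a 0 * c0 + a 1 * c1 + a 2 * c2 + a 3 * c3 + a 4 * c4)
        + a 1 * (b 0 * c0 + b 1 * c1 + b 2 * c2 + b 3 * c3 + b 4 * c4)
        + a 2 * (g 0 * c0 + g 1 * c1 + g 2 * c2 + g 3 * c3 + g 4 * c4) = 0 := by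
      intro c0 c1 c2 c3 c4 h0 h1 h2
      obtain ⟨f, hf⟩ := hb_exists' v hli ![c0, c1, c2, c3, c4]
      have hK := (K x f ((hf 0).trans h0) ((hf 1).trans h1) ((hf 2).trans h2)).2
      rw [hBB f, evA c0 c1 c2 c3 c4 f (hf 0) (hf 1) (hf 2) (hf 3) (hf 4),
        evB c0 c1 c2 c3 c4 f (hf 0) (hf 1) (hf 2) (hf 3) (hf 4),
        evG c0 c1 c2 c3 c4 f (hf 0) (hf 1) (hf 2) (hf 3) (hf 4)] at hK
      linear_combination hK - f (B (A (A (A x)))) * ha3 - f (B (A (A (A (A x))))) * ha4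
    have F1 := inst_a2 0 2 0 0 0 rfl rfl rfl
    have F2 := inst_a2 0 2 0 1 0 rfl rfl rfl
    have ha0 : a 0 = 0 := by
      linear_combination (4⁻¹ : ℂ) * F1 - (2⁻¹ : ℂ) * (a 0) * ha1
        - (2⁻¹ : ℂ) * (b 1) * ha1 - (2⁻¹ : ℂ) * hb1 - (2⁻¹ : ℂ) * (a 2) * hg1
    have ha2 : a 2 = 0 := by
      linear_combination (2⁻¹ : ℂ) * (F2 - F1) - (2⁻¹ : ℂ) * (a 0) * ha3
        - (2⁻¹ : ℂ) * hb3 - (2⁻¹ : ℂ) * (b 3) * ha1 - (2⁻¹ : ℂ) * (a 2) * hg3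
    have hb1' : b 1 = 0 := hb1.trans ha0
    have hb3' : b 3 = 0 := hb3.trans ha2
    have hg2' : g 2 = 0 := hg2.trans hb1'
    have hg4' : g 4 = 0 := hg4.trans hb3'
    refine ⟨?_, ?_, ?_⟩
    · rw [← ha, Fin.sum_univ_five, ha0, ha1, ha2, ha3, ha4]
      simp only [zero_smul, one_smul, add_zero, zero_add]
      rfl
    · rw [← hbd, Fin.sum_univ_five, hb0, hb1', hb2, hb3', hb4]
      simp only [zero_smul, one_smul, add_zero, zero_add]
      rfl
    · rw [← hgd, Fin.sum_univ_five, hg0, hg1, hg2', hg3, hg4']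
      simp only [zero_smul, one_smul, add_zero, zero_add]
      rfl
  · -- Case 2: x, Ax, A²x, A³x independent and A⁴x = 0
    set v : Fin 4 → X := ![x, A x, A (A x), A (A (A x))] with hv
    obtain ⟨a, ha⟩ := (mem_span_range_iff_exists_fun ℂ).mp
      (mem_span_aux' v hli (B x) 2 ![0,2,0,0] (fun f hf => (K x f (hf 0) (hf 1) (hf 2)).1))
    obtain ⟨b, hbd⟩ := (mem_span_range_iff_exists_fun ℂ).mp
      (mem_span_aux' v hli (B (A x)) 2 ![0,0,2,0]
        (fun f hf => (K (A x) f (hf 1) (hf 2) (hf 3)).1))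
    obtain ⟨g, hgd⟩ := (mem_span_range_iff_exists_fun ℂ).mp
      (mem_span_aux' v hli (B (A (A x))) 2 ![0,0,0,2]
        (fun f hf => (K (A (A x)) f (hf 2) (hf 3) (by rw [h4, map_zero])).1))
    have evA : ∀ (c0 c1 c2 c3 : ℂ) (f : X →L[ℂ] ℂ), f x = c0 → f (A x) = c1 →
        f (A (A x)) = c2 → f (A (A (A x))) = c3 →
        f (B x) = a 0 * c0 + a 1 * c1 + a 2 * c2 + a 3 * c3 := by
      intro c0 c1 c2 c3 f h0 h1 h2 h3
      rw [← ha, map_sum, Fin.sum_univ_four]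
      simp only [map_smul, smul_eq_mul]
      rw [show f (v 0) = c0 from h0, show f (v 1) = c1 from h1, show f (v 2) = c2 from h2,
        show f (v 3) = c3 from h3]
    have evB : ∀ (c0 c1 c2 c3 : ℂ) (f : X →L[ℂ] ℂ), f x = c0 → f (A x) = c1 →
        f (A (A x)) = c2 → f (A (A (A x))) = c3 →
        f (B (A x)) = b 0 * c0 + b 1 * c1 + b 2 * c2 + b 3 * c3 := by
      intro c0 c1 c2 c3 f h0 h1 h2 h3
      rw [← hbd, map_sum, Fin.sum_univ_four]
      simp only [map_smul, smul_eq_mul]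
      rw [show f (v 0) = c0 from h0, show f (v 1) = c1 from h1, show f (v 2) = c2 from h2,
        show f (v 3) = c3 from h3]
    have evG : ∀ (c0 c1 c2 c3 : ℂ) (f : X →L[ℂ] ℂ), f x = c0 → f (A x) = c1 →
        f (A (A x)) = c2 → f (A (A (A x))) = c3 →
        f (B (A (A x))) = g 0 * c0 + g 1 * c1 + g 2 * c2 + g 3 * c3 := by
      intro c0 c1 c2 c3 f h0 h1 h2 h3
      rw [← hgd, map_sum, Fin.sum_univ_four]
      simp only [map_smul, smul_eq_mul]
      rw [show f (v 0) = c0 from h0, show f (v 1) = c1 from h1, show f (v 2) = c2 from h2,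
        show f (v 3) = c3 from h3]
    have inst_a : ∀ c0 c1 c2 c3 : ℂ, c0 = 0 → c1 = 2 → c2 = 0 →
        a 0 * c0 + a 1 * c1 + a 2 * c2 + a 3 * c3 = 2 := by
      intro c0 c1 c2 c3 h0 h1 h2
      obtain ⟨f, hf⟩ := hb_exists' v hli ![c0, c1, c2, c3]
      have hK := (K x f ((hf 0).trans h0) ((hf 1).trans h1) ((hf 2).trans h2)).1
      rw [evA c0 c1 c2 c3 f (hf 0) (hf 1) (hf 2) (hf 3)] at hK
      exact hK
    have inst_b : ∀ c0 c1 c2 c3 : ℂ, c1 = 0 → c2 = 2 → c3 = 0 →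
        b 0 * c0 + b 1 * c1 + b 2 * c2 + b 3 * c3 = 2 := by
      intro c0 c1 c2 c3 h1 h2 h3
      obtain ⟨f, hf⟩ := hb_exists' v hli ![c0, c1, c2, c3]
      have hK := (K (A x) f ((hf 1).trans h1) ((hf 2).trans h2) ((hf 3).trans h3)).1
      rw [evB c0 c1 c2 c3 f (hf 0) (hf 1) (hf 2) (hf 3)] at hK
      exact hK
    have inst_g : ∀ c0 c1 c2 c3 : ℂ, c2 = 0 → c3 = 2 →
        g 0 * c0 + g 1 * c1 + g 2 * c2 + g 3 * c3 = 2 := by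
      intro c0 c1 c2 c3 h2 h3
      obtain ⟨f, hf⟩ := hb_exists' v hli ![c0, c1, c2, c3]
      have hK := (K (A (A x)) f ((hf 2).trans h2) ((hf 3).trans h3)
        (by rw [h4, map_zero])).1
      rw [evG c0 c1 c2 c3 f (hf 0) (hf 1) (hf 2) (hf 3)] at hK
      exact hK
    have inst_ab : ∀ c0 c1 c2 c3 : ℂ, c0 + c1 = 0 → c1 + c2 = 2 → c2 + c3 = 0 →
        (b 0 * c0 + b 1 * c1 + b 2 * c2 + b 3 * c3)
          + (a 0 * c0 + a 1 * c1 + a 2 * c2 + a 3 * c3) = 2 := by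
      intro c0 c1 c2 c3 h01 h12 h23
      obtain ⟨f, hf⟩ := hb_exists' v hli ![c0, c1, c2, c3]
      have hu0 : f (A x + x) = 0 := by
        rw [map_add, show f (A x) = c1 from hf 1, show f x = c0 from hf 0]
        linear_combination h01
      have hu1 : f (A (A x + x)) = 2 := by
        rw [map_add, map_add, show f (A (A x)) = c2 from hf 2, show f (A x) = c1 from hf 1]
        linear_combination h12
      have hu2 : f (A (A (A x + x))) = 0 := by
        rw [map_add, map_add, map_add,
          show f (A (A (A x))) = c3 from hf 3, show f (A (A x)) = c2 from hf 2]
        linear_combination h23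
      have hK := (K (A x + x) f hu0 hu1 hu2).1
      rw [map_add, map_add, evB c0 c1 c2 c3 f (hf 0) (hf 1) (hf 2) (hf 3),
        evA c0 c1 c2 c3 f (hf 0) (hf 1) (hf 2) (hf 3)] at hK
      exact hK
    have inst_bg : ∀ c0 c1 c2 c3 : ℂ, c1 + c2 = 0 → c2 + c3 = 2 → c3 = 0 →
        (g 0 * c0 + g 1 * c1 + g 2 * c2 + g 3 * c3)
          + (b 0 * c0 + b 1 * c1 + b 2 * c2 + b 3 * c3) = 2 := by
      intro c0 c1 c2 c3 h12 h23 h3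
      obtain ⟨f, hf⟩ := hb_exists' v hli ![c0, c1, c2, c3]
      have hu0 : f (A (A x) + A x) = 0 := by
        rw [map_add, show f (A (A x)) = c2 from hf 2, show f (A x) = c1 from hf 1]
        linear_combination h12
      have hu1 : f (A (A (A x) + A x)) = 2 := by
        rw [map_add, map_add,
          show f (A (A (A x))) = c3 from hf 3, show f (A (A x)) = c2 from hf 2]
        linear_combination h23
      have hu2 : f (A (A (A (A x) + A x))) = 0 := by
        rw [map_add, map_add, map_add, h4, map_zero,
          show f (A (A (A x))) = c3 from hf 3]
        linear_combination h3
      have hK := (K (A (A x) + A x) f hu0 hu1 hu2).1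
      rw [map_add, map_add, evG c0 c1 c2 c3 f (hf 0) (hf 1) (hf 2) (hf 3),
        evB c0 c1 c2 c3 f (hf 0) (hf 1) (hf 2) (hf 3)] at hK
      exact hK
    have HA1 := inst_a 0 2 0 0 rfl rfl rfl
    have HA2 := inst_a 0 2 0 1 rfl rfl rfl
    have HB1 := inst_b 0 0 2 0 rfl rfl rfl
    have HB2 := inst_b 1 0 2 0 rfl rfl rfl
    have HC1 := inst_g 0 0 0 2 rfl rfl
    have HC2 := inst_g 1 0 0 2 rfl rfl
    have HC3 := inst_g 0 1 0 2 rfl rfl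
    have HD1 := inst_ab 0 0 2 (-2) (by norm_num) (by norm_num) (by norm_num)
    have HD2 := inst_ab (-1) 1 1 (-1) (by norm_num) (by norm_num) (by norm_num)
    have HE := inst_bg 0 (-2) 2 0 (by norm_num) (by norm_num) (by norm_num)
    have ha1 : a 1 = 1 := by linear_combination (2⁻¹ : ℂ) * HA1
    have ha3 : a 3 = 0 := by linear_combination HA2 - HA1
    have hb2 : b 2 = 1 := by linear_combination (2⁻¹ : ℂ) * HB1
    have hb0 : b 0 = 0 := by linear_combination HB2 - HB1
    have hg3 : g 3 = 1 := by linear_combination (2⁻¹ : ℂ) * HC1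
    have hg0 : g 0 = 0 := by linear_combination HC2 - HC1
    have hg1 : g 1 = 0 := by linear_combination HC3 - HC1
    have hb3 : b 3 = a 2 := by linear_combination (-2⁻¹ : ℂ) * HD1 - ha3 + hb2
    have hb1 : b 1 = a 0 := by linear_combination HD2 - ha1 + hb3 + ha3 + hb0 - hb2
    have hg2 : g 2 = b 1 := by linear_combination (2⁻¹ : ℂ) * HE - hb2 + hg1
    have hBB : ∀ f : X →L[ℂ] ℂ, f (B (B x)) =
        a 0 * f (B x) + a 1 * f (B (A x)) + a 2 * f (B (A (A x)))
        + a 3 * f (B (A (A (A x)))) := by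
      intro f
      conv_lhs => rw [← ha]
      rw [map_sum, map_sum, Fin.sum_univ_four]
      simp only [map_smul, smul_eq_mul]
      rfl
    have inst_a2 : ∀ c0 c1 c2 c3 : ℂ, c0 = 0 → c1 = 2 → c2 = 0 →
        a 0 * (a 0 * c0 + a 1 * c1 + a 2 * c2 + a 3 * c3)
        + a 1 * (b 0 * c0 + b 1 * c1 + b 2 * c2 + b 3 * c3)
        + a 2 * (g 0 * c0 + g 1 * c1 + g 2 * c2 + g 3 * c3) = 0 := by
      intro c0 c1 c2 c3 h0 h1 h2
      obtain ⟨f, hf⟩ := hb_exists' v hli ![c0, c1, c2, c3]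
      have hK := (K x f ((hf 0).trans h0) ((hf 1).trans h1) ((hf 2).trans h2)).2
      rw [hBB f, evA c0 c1 c2 c3 f (hf 0) (hf 1) (hf 2) (hf 3),
        evB c0 c1 c2 c3 f (hf 0) (hf 1) (hf 2) (hf 3),
        evG c0 c1 c2 c3 f (hf 0) (hf 1) (hf 2) (hf 3)] at hK
      linear_combination hK - f (B (A (A (A x)))) * ha3
    have F1 := inst_a2 0 2 0 0 rfl rfl rfl
    have F2 := inst_a2 0 2 0 1 rfl rfl rfl
    have ha0 : a 0 = 0 := by
      linear_combination (4⁻¹ : ℂ) * F1 - (2⁻¹ : ℂ) * (a 0) * ha1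
        - (2⁻¹ : ℂ) * (b 1) * ha1 - (2⁻¹ : ℂ) * hb1 - (2⁻¹ : ℂ) * (a 2) * hg1
    have ha2 : a 2 = 0 := by
      linear_combination (2⁻¹ : ℂ) * (F2 - F1) - (2⁻¹ : ℂ) * (a 0) * ha3
        - (2⁻¹ : ℂ) * hb3 - (2⁻¹ : ℂ) * (b 3) * ha1 - (2⁻¹ : ℂ) * (a 2) * hg3
    have hb1' : b 1 = 0 := hb1.trans ha0
    have hb3' : b 3 = 0 := hb3.trans ha2
    have hg2' : g 2 = 0 := hg2.trans hb1'
    refine ⟨?_, ?_, ?_⟩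
    · rw [← ha, Fin.sum_univ_four, ha0, ha1, ha2, ha3]
      simp only [zero_smul, one_smul, add_zero, zero_add]
      rfl
    · rw [← hbd, Fin.sum_univ_four, hb0, hb1', hb2, hb3']
      simp only [zero_smul, one_smul, add_zero, zero_add]
      rfl
    · rw [← hgd, Fin.sum_univ_four, hg0, hg1, hg2', hg3]
      simp only [zero_smul, one_smul, add_zero, zero_add]
      rfl
end
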